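/- arXiv:1507.07831 — 4 statements merged into one kernel-verified Lean document; each statement's English description precedes it below -/
import Mathlib

section
/- Let d ≥ 2, γ ∈ (0,1), let E be a measurable subset of ℝ^{d-1} with finite diameter, and let K : E × E → ℝ be measurable with |K(x,y)| ≤ A/|x-y|^{d-1-γ} for all x ≠ y in E, and |K(x₁,y) - K(x₂,y)| ≤ |x₁-x₂| · A/|x₁-y|^{d-γ} whenever |x₁-x₂| ≤ |x₁-y|/2. Then there is a constant C depending only on d and γ such that for every bounded measurable f : E → ℝ the function g(x) = ∫_E K(x,y) f(y) dy satisfies ‖g‖_{∞,E} ≤ C A diam(E)^γ ‖f‖_{∞,E} and ‖g‖_{γ,E} ≤ C A ‖f‖_{∞,E}. -/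
/-!
Everything reduces to integrating the majorant `‖y - x‖ ^ (γ - n)` in polar coordinates, where
`n = d - 1` is the dimension: over a ball of radius `r` it contributes a multiple of `r ^ γ`,
which with `r = diam E` is the uniform bound. For the Hölder bound put `δ = ‖x₁ - x₂‖` and split
`E` at the ball of radius `2δ` about `x₁`. Inside, each of the two integrals is `O(δ ^ γ)` by the
same estimate; outside, the smoothness condition bounds the difference of the kernels by
`δ ‖y - x₁‖ ^ (γ - 1 - n)`, whose integral off the ball is `O(δ (2δ) ^ (γ - 1)) = O(δ ^ γ)`.
-/

open MeasureTheory Metric Set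
open scoped RealInnerProductSpace

noncomputable def sphereVol (d : ℕ) : ℝ :=
  d * (volume (Metric.ball (0 : EuclideanSpace ℝ (Fin d)) 1)).toReal

noncomputable def gradN (d : ℕ) (y : EuclideanSpace ℝ (Fin d)) : EuclideanSpace ℝ (Fin d) :=
  (sphereVol d * ‖y‖ ^ d)⁻¹ • y

noncomputable def hessN (d : ℕ) (z w : EuclideanSpace ℝ (Fin d)) : EuclideanSpace ℝ (Fin d) :=
  (sphereVol d)⁻¹ • ((‖z‖ ^ d)⁻¹ • w - ((d : ℝ) * (‖z‖ ^ (d + 2))⁻¹ * ⟪z, w⟫) • z)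

/-- `Φ` is a defining function of class `C^{1+γ}` for the set `D`. -/
def IsDefining (d : ℕ) (γ : ℝ) (D : Set (EuclideanSpace ℝ (Fin d)))
    (Φ : EuclideanSpace ℝ (Fin d) → ℝ) : Prop :=
  ContDiff ℝ 1 Φ ∧
  (∃ K : ℝ, ∀ x y, ‖gradient Φ x - gradient Φ y‖ ≤ K * ‖x - y‖ ^ γ) ∧
  D = {x | Φ x < 0} ∧
  frontier D = {x | Φ x = 0} ∧
  ∀ x ∈ frontier D, gradient Φ x ≠ 0

/-- `D` is a bounded domain of class `C^{1+γ}`. -/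
def IsC1Domain (d : ℕ) (γ : ℝ) (D : Set (EuclideanSpace ℝ (Fin d))) : Prop :=
  IsOpen D ∧ Bornology.IsBounded D ∧ ∃ Φ, IsDefining d γ D Φ

open Module

theorem pow_sub_one_mul_rpow {n : ℕ} (hn : n ≠ 0) {r : ℝ} (hr : 0 < r) (t : ℝ) :
    r ^ (n - 1) * r ^ t = r ^ ((n : ℝ) - 1 + t) := by
  rw [← Real.rpow_natCast, ← Real.rpow_add hr, Nat.cast_pred (Nat.pos_of_ne_zero hn)]

section Preimage

variable {V : Type*} [SeminormedAddCommGroup V]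

theorem indicator_preimage_norm_sub (x : V) (S : Set ℝ) (g : ℝ → ℝ) :
    ((‖· - x‖) ⁻¹' S).indicator (fun y ↦ g ‖y - x‖) = fun y ↦ S.indicator g ‖y - x‖ :=
  funext fun _ ↦ indicator_comp_right (‖· - x‖)

theorem closedBall_eq_preimage_norm_sub (x : V) (R : ℝ) :
    closedBall x R = (‖· - x‖) ⁻¹' Iic R := by
  ext; simp [dist_eq_norm]

theorem compl_ball_eq_preimage_norm_sub (x : V) (R : ℝ) : (ball x R)ᶜ = (‖· - x‖) ⁻¹' Ici R := by
  ext; simp [dist_eq_norm]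

end Preimage

section Radial

variable {V : Type*} [NormedAddCommGroup V] [NormedSpace ℝ V] [MeasurableSpace V] [BorelSpace V]
  [FiniteDimensional ℝ V] [Nontrivial V] (μ : Measure V) [μ.IsAddHaarMeasure]

theorem setIntegral_preimage_norm_sub (x : V) {S : Set ℝ} (hS : MeasurableSet S) (g : ℝ → ℝ) :
    ∫ y in (‖· - x‖) ⁻¹' S, g ‖y - x‖ ∂μ =
      μ.toSphere.real univ * ∫ r in S ∩ Ioi 0, r ^ (finrank ℝ V - 1) * g r := by
  rw [← integral_indicator (hS.preimage (by fun_prop)), indicator_preimage_norm_sub,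
    integral_sub_right_eq_self (fun y ↦ S.indicator g ‖y‖), integral_fun_norm_addHaar,
    Measure.toSphere_real_apply_univ, ← Measure.restrict_restrict hS, ← integral_indicator hS]
  simp [indicator_mul_right, mul_assoc]

theorem integrableOn_preimage_norm_sub (x : V) {S : Set ℝ} (hS : MeasurableSet S) {g : ℝ → ℝ}
    (hg : IntegrableOn (fun r ↦ r ^ (finrank ℝ V - 1) * g r) (S ∩ Ioi 0)) :
    IntegrableOn (fun y ↦ g ‖y - x‖) ((‖· - x‖) ⁻¹' S) μ := by
  rw [← integrable_indicator_iff (hS.preimage (by fun_prop)), indicator_preimage_norm_sub]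
  refine Integrable.comp_sub_right (f := fun y ↦ S.indicator g ‖y‖) ?_ x
  rw [integrable_fun_norm_addHaar]
  rw [IntegrableOn, ← Measure.restrict_restrict hS, ← IntegrableOn,
    ← integrable_indicator_iff hS] at hg
  exact hg.congr (ae_of_all _ fun r ↦ by simp [indicator_mul_right])

theorem toSphere_real_univ_pos : 0 < μ.toSphere.real univ := by
  rw [Measure.toSphere_real_apply_univ]
  exact mul_pos (Nat.cast_pos.2 finrank_pos)
    (ENNReal.toReal_pos (measure_ball_pos μ 0 one_pos).ne' measure_ball_lt_top.ne)

variable {t : ℝ}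

theorem integrableOn_closedBall_norm_sub_rpow (ht : -(finrank ℝ V : ℝ) < t) (x : V) (R : ℝ) :
    IntegrableOn (fun y ↦ ‖y - x‖ ^ t) (closedBall x R) μ := by
  rw [closedBall_eq_preimage_norm_sub]
  refine integrableOn_preimage_norm_sub μ x measurableSet_Iic (g := (· ^ t)) ?_
  rw [Iic_inter_Ioi]
  refine (intervalIntegral.intervalIntegrable_rpow' (a := 0) (b := R) ?_).1.congr_fun
    (fun r hr ↦ (pow_sub_one_mul_rpow finrank_pos.ne' hr.1 t).symm) measurableSet_Ioc
  linarith

theorem setIntegral_closedBall_norm_sub_rpow (ht : -(finrank ℝ V : ℝ) < t) (x : V) {R : ℝ}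
    (hR : 0 ≤ R) :
    ∫ y in closedBall x R, ‖y - x‖ ^ t ∂μ =
      μ.toSphere.real univ * (R ^ (finrank ℝ V + t) / (finrank ℝ V + t)) := by
  rw [closedBall_eq_preimage_norm_sub, setIntegral_preimage_norm_sub μ x measurableSet_Iic (· ^ t),
    Iic_inter_Ioi, setIntegral_congr_fun measurableSet_Ioc
      fun r hr ↦ pow_sub_one_mul_rpow finrank_pos.ne' hr.1 t, ← intervalIntegral.integral_of_le hR,
    integral_rpow (by left; linarith), Real.zero_rpow (by linarith)]
  ring_nf

theorem integrableOn_compl_ball_norm_sub_rpow (ht : t < -(finrank ℝ V : ℝ)) (x : V) {R : ℝ}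
    (hR : 0 < R) :
    IntegrableOn (fun y ↦ ‖y - x‖ ^ t) (ball x R)ᶜ μ := by
  rw [compl_ball_eq_preimage_norm_sub]
  refine integrableOn_preimage_norm_sub μ x measurableSet_Ici (g := (· ^ t)) ?_
  rw [inter_eq_left.2 (Ici_subset_Ioi.2 hR), integrableOn_Ici_iff_integrableOn_Ioi]
  exact (integrableOn_Ioi_rpow_of_lt (by linarith) hR).congr_fun
    (fun r hr ↦ (pow_sub_one_mul_rpow finrank_pos.ne' (hR.trans hr) t).symm) measurableSet_Ioi

theorem setIntegral_compl_ball_norm_sub_rpow (ht : t < -(finrank ℝ V : ℝ)) (x : V) {R : ℝ}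
    (hR : 0 < R) :
    ∫ y in (ball x R)ᶜ, ‖y - x‖ ^ t ∂μ =
      μ.toSphere.real univ * (R ^ (finrank ℝ V + t) / -(finrank ℝ V + t)) := by
  rw [compl_ball_eq_preimage_norm_sub, setIntegral_preimage_norm_sub μ x measurableSet_Ici (· ^ t),
    inter_eq_left.2 (Ici_subset_Ioi.2 hR), integral_Ici_eq_integral_Ioi,
    setIntegral_congr_fun measurableSet_Ioi
      fun r hr ↦ pow_sub_one_mul_rpow finrank_pos.ne' (hR.trans hr) t,
    integral_Ioi_rpow_of_lt (by linarith) hR,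
    show (finrank ℝ V : ℝ) - 1 + t + 1 = finrank ℝ V + t by ring, neg_div, div_neg]

end Radial

theorem ae_restrict_of_forall_mem_ne {α : Type*} [MeasurableSpace α] {μ : Measure α}
    [NullSingletonClass μ] {S : Set α} (hS : MeasurableSet S) {x : α} {p : α → Prop}
    (h : ∀ y ∈ S, y ≠ x → p y) : ∀ᵐ y ∂μ.restrict S, p y := by
  have hne : ∀ᵐ y ∂μ.restrict S, y ≠ x := ae_restrict_of_ae (ae_iff.2 (by simp))
  filter_upwards [ae_restrict_mem hS, hne] with y hyS hyx using h y hyS hyx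

theorem abs_mul_le_of_abs_le_div_rpow {a b A F u s : ℝ} (hu : 0 ≤ u) (ha : |a| ≤ A / u ^ s)
    (hb : |b| ≤ F) : |a * b| ≤ A * F * u ^ (-s) := by
  rw [abs_mul, Real.rpow_neg hu, mul_right_comm, ← div_eq_mul_inv]
  exact mul_le_mul ha hb (abs_nonneg _) ((abs_nonneg _).trans ha)

theorem integral_sub_eq_inter_sub_add_sdiff {α : Type*} [MeasurableSpace α] {μ : Measure α}
    {E B : Set α} {g h : α → ℝ} (hB : MeasurableSet B) (hg : IntegrableOn g E μ)
    (hh : IntegrableOn h E μ) :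
    ∫ y in E, g y ∂μ - ∫ y in E, h y ∂μ =
      (∫ y in E ∩ B, g y ∂μ - ∫ y in E ∩ B, h y ∂μ) + ∫ y in E \ B, (g y - h y) ∂μ := by
  rw [← integral_inter_add_sdiff hB hg, ← integral_inter_add_sdiff hB hh,
    integral_sub (hg.mono_set sdiff_subset) (hh.mono_set sdiff_subset)]
  ring

section Majorant

variable {V : Type*} [NormedAddCommGroup V] [NormedSpace ℝ V] [MeasurableSpace V] [BorelSpace V]
  [FiniteDimensional ℝ V] [Nontrivial V] (μ : Measure V) [μ.IsAddHaarMeasure]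
  {k : V → ℝ} {S : Set V} {x : V} {M t γ : ℝ}

theorem abs_setIntegral_le_mul_setIntegral_norm_sub_rpow (hS : MeasurableSet S) {T : Set V}
    (hST : S ⊆ T) (hM : 0 ≤ M) (hint : IntegrableOn (fun y ↦ ‖y - x‖ ^ t) T μ)
    (hk : ∀ y ∈ S, y ≠ x → |k y| ≤ M * ‖y - x‖ ^ t) :
    |∫ y in S, k y ∂μ| ≤ M * ∫ y in T, ‖y - x‖ ^ t ∂μ := calc
  |∫ y in S, k y ∂μ| ≤ ∫ y in S, M * ‖y - x‖ ^ t ∂μ := by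
    rw [← Real.norm_eq_abs]
    exact norm_integral_le_of_norm_le ((hint.mono_set hST).const_mul M)
      (ae_restrict_of_forall_mem_ne hS fun y hy hne ↦ (hk y hy hne).trans_eq' (Real.norm_eq_abs _))
  _ ≤ ∫ y in T, M * ‖y - x‖ ^ t ∂μ :=
    setIntegral_mono_set (hint.const_mul M) (ae_of_all _ fun _ ↦ by positivity) hST.eventuallyLE
  _ = M * ∫ y in T, ‖y - x‖ ^ t ∂μ := integral_const_mul _ _

theorem abs_setIntegral_le_of_subset_closedBall (hγ : 0 < γ) (hS : MeasurableSet S) {r : ℝ}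
    (hr : 0 ≤ r) (hSr : S ⊆ closedBall x r) (hM : 0 ≤ M)
    (hk : ∀ y ∈ S, y ≠ x → |k y| ≤ M * ‖y - x‖ ^ (γ - finrank ℝ V)) :
    |∫ y in S, k y ∂μ| ≤ μ.toSphere.real univ / γ * M * r ^ γ := by
  have ht : -(finrank ℝ V : ℝ) < γ - finrank ℝ V := by linarith
  refine (abs_setIntegral_le_mul_setIntegral_norm_sub_rpow μ hS hSr hM
    (integrableOn_closedBall_norm_sub_rpow μ ht x r) hk).trans_eq ?_
  rw [setIntegral_closedBall_norm_sub_rpow μ ht x hr, add_sub_cancel]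
  ring

theorem abs_setIntegral_le_of_subset_compl_ball (hγ : γ < 1) (hS : MeasurableSet S) {ρ : ℝ}
    (hρ : 0 < ρ) (hSρ : S ⊆ (ball x ρ)ᶜ) (hM : 0 ≤ M)
    (hk : ∀ y ∈ S, |k y| ≤ M * ‖y - x‖ ^ (γ - 1 - finrank ℝ V)) :
    |∫ y in S, k y ∂μ| ≤ μ.toSphere.real univ / (1 - γ) * M * ρ ^ (γ - 1) := by
  have ht : γ - 1 - finrank ℝ V < -(finrank ℝ V : ℝ) := by linarith
  refine (abs_setIntegral_le_mul_setIntegral_norm_sub_rpow μ hS hSρ hM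
    (integrableOn_compl_ball_norm_sub_rpow μ ht x hρ) fun y hy _ ↦ hk y hy).trans_eq ?_
  rw [setIntegral_compl_ball_norm_sub_rpow μ ht x hρ, add_sub_cancel, neg_sub]
  ring

theorem integrableOn_of_abs_le_norm_sub_rpow (hγ : 0 < γ) (hS : MeasurableSet S)
    (hSb : Bornology.IsBounded S) (hkm : AEStronglyMeasurable k (μ.restrict S))
    (hk : ∀ y ∈ S, y ≠ x → |k y| ≤ M * ‖y - x‖ ^ (γ - finrank ℝ V)) :
    IntegrableOn k S μ := by
  obtain ⟨r, hSr⟩ := hSb.subset_closedBall x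
  have ht : -(finrank ℝ V : ℝ) < γ - finrank ℝ V := by linarith
  exact (((integrableOn_closedBall_norm_sub_rpow μ ht x r).mono_set hSr).const_mul M).mono' hkm
    (ae_restrict_of_forall_mem_ne hS fun y hy hne ↦ (hk y hy hne).trans_eq' (Real.norm_eq_abs _))

end Majorant

section Kernel

variable {V : Type*} [NormedAddCommGroup V] [NormedSpace ℝ V]
  {E : Set V} {K : V → V → ℝ} {f : V → ℝ} {A F γ : ℝ} {x x₁ x₂ : V}

theorem abs_kernel_mul_le
    (hK : ∀ x ∈ E, ∀ y ∈ E, x ≠ y → |K x y| ≤ A / ‖x - y‖ ^ ((finrank ℝ V : ℝ) - γ))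
    (hf : ∀ y ∈ E, |f y| ≤ F) (hx : x ∈ E) :
    ∀ y ∈ E, y ≠ x → |K x y * f y| ≤ A * F * ‖y - x‖ ^ (γ - finrank ℝ V) := fun y hy hne ↦ by
  rw [norm_sub_rev, ← neg_sub (finrank ℝ V : ℝ) γ]
  exact abs_mul_le_of_abs_le_div_rpow (norm_nonneg _) (hK x hx y hy hne.symm) (hf y hy)

theorem abs_sub_kernel_mul_le_of_two_mul_le
    (hKlip : ∀ x₁ ∈ E, ∀ x₂ ∈ E, ∀ y ∈ E, ‖x₁ - x₂‖ ≤ ‖x₁ - y‖ / 2 →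
      |K x₁ y - K x₂ y| ≤ ‖x₁ - x₂‖ * (A / ‖x₁ - y‖ ^ ((finrank ℝ V : ℝ) + 1 - γ)))
    (hf : ∀ y ∈ E, |f y| ≤ F) (hx₁ : x₁ ∈ E) (hx₂ : x₂ ∈ E) {y : V} (hy : y ∈ E)
    (hfar : 2 * ‖x₁ - x₂‖ ≤ ‖y - x₁‖) :
    |K x₁ y * f y - K x₂ y * f y| ≤ ‖x₁ - x₂‖ * A * F * ‖y - x₁‖ ^ (γ - 1 - finrank ℝ V) := by
  rw [← sub_mul, norm_sub_rev y, show γ - 1 - finrank ℝ V = -((finrank ℝ V : ℝ) + 1 - γ) by ring]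
  refine abs_mul_le_of_abs_le_div_rpow (norm_nonneg _) ?_ (hf y hy)
  rw [mul_div_assoc]
  exact hKlip x₁ hx₁ x₂ hx₂ y hy (by linarith [norm_sub_rev x₁ y])

variable [MeasurableSpace V] [BorelSpace V] [FiniteDimensional ℝ V] [Nontrivial V]
  (μ : Measure V) [μ.IsAddHaarMeasure]

theorem abs_setIntegral_kernel_mul_le (hγ : 0 < γ) (hA : 0 ≤ A) (hF : 0 ≤ F)
    (hK : ∀ x ∈ E, ∀ y ∈ E, x ≠ y → |K x y| ≤ A / ‖x - y‖ ^ ((finrank ℝ V : ℝ) - γ))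
    (hf : ∀ y ∈ E, |f y| ≤ F) (hx : x ∈ E) {S : Set V} (hS : MeasurableSet S) (hSE : S ⊆ E)
    {r : ℝ} (hr : 0 ≤ r) (hSr : S ⊆ closedBall x r) :
    |∫ y in S, K x y * f y ∂μ| ≤ μ.toSphere.real univ / γ * (A * F) * r ^ γ :=
  abs_setIntegral_le_of_subset_closedBall μ hγ hS hr hSr (mul_nonneg hA hF)
    fun y hy ↦ abs_kernel_mul_le hK hf hx y (hSE hy)

theorem integrableOn_kernel_mul (hγ : 0 < γ) (hE : MeasurableSet E)
    (hEb : Bornology.IsBounded E) (hKm : Measurable (Function.uncurry K)) (hfm : Measurable f)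
    (hK : ∀ x ∈ E, ∀ y ∈ E, x ≠ y → |K x y| ≤ A / ‖x - y‖ ^ ((finrank ℝ V : ℝ) - γ))
    (hf : ∀ y ∈ E, |f y| ≤ F) (hx : x ∈ E) :
    IntegrableOn (fun y ↦ K x y * f y) E μ :=
  integrableOn_of_abs_le_norm_sub_rpow μ hγ hE hEb
    ((hKm.comp measurable_prodMk_left).mul hfm).aestronglyMeasurable (abs_kernel_mul_le hK hf hx)

theorem abs_integral_kernel_mul_le (hγ : 0 < γ) (hA : 0 ≤ A) (hF : 0 ≤ F) (hE : MeasurableSet E)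
    (hEb : Bornology.IsBounded E)
    (hK : ∀ x ∈ E, ∀ y ∈ E, x ≠ y → |K x y| ≤ A / ‖x - y‖ ^ ((finrank ℝ V : ℝ) - γ))
    (hf : ∀ y ∈ E, |f y| ≤ F) (hx : x ∈ E) :
    |∫ y in E, K x y * f y ∂μ| ≤ μ.toSphere.real univ / γ * A * diam E ^ γ * F :=
  (abs_setIntegral_kernel_mul_le μ hγ hA hF hK hf hx hE subset_rfl diam_nonneg
    fun _ hy ↦ mem_closedBall.2 (dist_le_diam_of_mem hEb hy hx)).trans_eq (by ring)

theorem abs_integral_kernel_mul_sub_integral_le (hγ₀ : 0 < γ) (hγ₁ : γ < 1) (hA : 0 ≤ A) (hF : 0 ≤ F)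
    (hE : MeasurableSet E) (hEb : Bornology.IsBounded E) (hKm : Measurable (Function.uncurry K))
    (hfm : Measurable f)
    (hK : ∀ x ∈ E, ∀ y ∈ E, x ≠ y → |K x y| ≤ A / ‖x - y‖ ^ ((finrank ℝ V : ℝ) - γ))
    (hKlip : ∀ x₁ ∈ E, ∀ x₂ ∈ E, ∀ y ∈ E, ‖x₁ - x₂‖ ≤ ‖x₁ - y‖ / 2 →
      |K x₁ y - K x₂ y| ≤ ‖x₁ - x₂‖ * (A / ‖x₁ - y‖ ^ ((finrank ℝ V : ℝ) + 1 - γ)))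
    (hf : ∀ y ∈ E, |f y| ≤ F) (hx₁ : x₁ ∈ E) (hx₂ : x₂ ∈ E) :
    |∫ y in E, K x₁ y * f y ∂μ - ∫ y in E, K x₂ y * f y ∂μ| ≤
      ((2 ^ γ + 3 ^ γ) * (μ.toSphere.real univ / γ) +
        2 ^ (γ - 1) * (μ.toSphere.real univ / (1 - γ))) * A * F * ‖x₁ - x₂‖ ^ γ := by
  rcases eq_or_ne x₁ x₂ with rfl | hne
  · simp [Real.zero_rpow hγ₀.ne']
  set δ := ‖x₁ - x₂‖
  have hδ : 0 < δ := norm_sub_pos_iff.2 hne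
  set B := ball x₁ (2 * δ)
  have hB : MeasurableSet B := measurableSet_ball
  have hsplit := integral_sub_eq_inter_sub_add_sdiff hB
    (integrableOn_kernel_mul μ hγ₀ hE hEb hKm hfm hK hf hx₁)
    (integrableOn_kernel_mul μ hγ₀ hE hEb hKm hfm hK hf hx₂)
  have hB₁ : B ⊆ closedBall x₁ (2 * δ) := ball_subset_closedBall
  have hB₂ : B ⊆ closedBall x₂ (3 * δ) :=
    hB₁.trans (closedBall_subset_closedBall' (by rw [dist_eq_norm]; linarith))
  have hnear₁ := abs_setIntegral_kernel_mul_le μ hγ₀ hA hF hK hf hx₁ (hE.inter hB)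
    inter_subset_left (by positivity) (inter_subset_right.trans hB₁)
  have hnear₂ := abs_setIntegral_kernel_mul_le μ hγ₀ hA hF hK hf hx₂ (hE.inter hB)
    inter_subset_left (by positivity) (inter_subset_right.trans hB₂)
  have hfar := abs_setIntegral_le_of_subset_compl_ball μ hγ₁ (hE.diff hB)
    (ρ := 2 * δ) (by positivity) (fun _ hy ↦ hy.2) (by positivity) fun y hy ↦
      abs_sub_kernel_mul_le_of_two_mul_le hKlip hf hx₁ hx₂ hy.1
        (by simpa [B, dist_eq_norm] using hy.2)
  calc _ ≤ |∫ y in E ∩ B, K x₁ y * f y ∂μ| + |∫ y in E ∩ B, K x₂ y * f y ∂μ| +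
        |∫ y in E \ B, (K x₁ y * f y - K x₂ y * f y) ∂μ| := by
        rw [hsplit]; exact (abs_add_le _ _).trans (add_le_add_left (abs_sub _ _) _)
    _ ≤ _ := add_le_add (add_le_add hnear₁ hnear₂) hfar
    _ = _ := by
      rw [Real.mul_rpow (by norm_num) hδ.le, Real.mul_rpow (by norm_num) hδ.le,
        Real.mul_rpow (by norm_num) hδ.le, Real.rpow_sub_one hδ.ne']
      field_simp
      ring

end Kernel

/-- Lemma 3.1: uniform and Hölder bounds for weakly singular integral operators. -/
theorem weakly_singular_kernel_bounds
    (d : ℕ) (hd : 2 ≤ d) (γ : ℝ) (hγ : γ ∈ Set.Ioo (0:ℝ) 1) :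
    ∃ C > (0:ℝ),
      ∀ (E : Set (EuclideanSpace ℝ (Fin (d - 1))))
        (K : EuclideanSpace ℝ (Fin (d - 1)) → EuclideanSpace ℝ (Fin (d - 1)) → ℝ)
        (f : EuclideanSpace ℝ (Fin (d - 1)) → ℝ) (A F : ℝ),
        MeasurableSet E → Bornology.IsBounded E →
        Measurable (Function.uncurry K) → Measurable f →
        (∀ x ∈ E, ∀ y ∈ E, x ≠ y → |K x y| ≤ A / ‖x - y‖ ^ ((d:ℝ) - 1 - γ)) →
        (∀ x₁ ∈ E, ∀ x₂ ∈ E, ∀ y ∈ E, ‖x₁ - x₂‖ ≤ ‖x₁ - y‖ / 2 →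
          |K x₁ y - K x₂ y| ≤ ‖x₁ - x₂‖ * (A / ‖x₁ - y‖ ^ ((d:ℝ) - γ))) →
        (∀ y ∈ E, |f y| ≤ F) →
        (∀ x ∈ E, |∫ y in E, K x y * f y| ≤ C * A * Metric.diam E ^ γ * F) ∧
        (∀ x₁ ∈ E, ∀ x₂ ∈ E,
          |(∫ y in E, K x₁ y * f y) - ∫ y in E, K x₂ y * f y|
            ≤ C * A * F * ‖x₁ - x₂‖ ^ γ) := by
  obtain ⟨hγ₀, hγ₁⟩ := hγ
  have : Nonempty (Fin (d - 1)) := ⟨⟨0, by omega⟩⟩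
  set σ := (volume : Measure (EuclideanSpace ℝ (Fin (d - 1)))).toSphere.real univ
  have hσ : 0 < σ := toSphere_real_univ_pos volume
  refine ⟨max (σ / γ) ((2 ^ γ + 3 ^ γ) * (σ / γ) + 2 ^ (γ - 1) * (σ / (1 - γ))),
    lt_max_of_lt_left (by positivity), ?_⟩
  intro E K f A F hE hEb hKm hfm hK hKlip hf
  rcases E.subsingleton_or_nontrivial with hsub | ⟨a, ha, b, hb, hab⟩
  · have hE₀ : volume.restrict E = 0 := Measure.restrict_eq_zero.2 (hsub.measure_zero _)
    exact ⟨fun _ _ ↦ by simp [hE₀, diam_subsingleton hsub, Real.zero_rpow hγ₀.ne'],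
      fun _ h₁ _ h₂ ↦ by simp [hE₀, hsub h₁ h₂, Real.zero_rpow hγ₀.ne']⟩
  have hdim : (finrank ℝ (EuclideanSpace ℝ (Fin (d - 1))) : ℝ) = d - 1 := by
    simp [Nat.cast_sub (by omega : 1 ≤ d)]
  rw [← hdim] at hK
  rw [show (d : ℝ) - γ = (d : ℝ) - 1 + 1 - γ by ring, ← hdim] at hKlip
  have hA : 0 ≤ A := by
    have hpos : 0 < ‖a - b‖ ^ ((finrank ℝ (EuclideanSpace ℝ (Fin (d - 1))) : ℝ) - γ) :=
      Real.rpow_pos_of_pos (norm_sub_pos_iff.2 hab) _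
    simpa using (le_div_iff₀ hpos).1 ((abs_nonneg _).trans (hK a ha b hb hab))
  have hF : 0 ≤ F := (abs_nonneg _).trans (hf a ha)
  refine ⟨fun x hx ↦ (abs_integral_kernel_mul_le volume hγ₀ hA hF hE hEb hK hf hx).trans ?_,
    fun x₁ h₁ x₂ h₂ ↦ (abs_integral_kernel_mul_sub_integral_le volume hγ₀ hγ₁ hA hF hE hEb hKm hfm hK
      hKlip hf h₁ h₂).trans ?_⟩
  · gcongr
    exact le_max_left _ _
  · gcongr
    exact le_max_right _ _
end

section
/- A priori uniform and lower bounds for the transported defining function: assume the patch flow setup on [0,T], and let Φ : ℝ^d × [0,T] → ℝ be continuous such that for each t the function Φ(·,t) is a defining function for D_t of class C^{1+γ}. Let G : ℝ^d × [0,T] → ℝ^{d×d} be a matrix field and g : [0,T] → [0,∞) an integrable function with operator norm ‖G(x,t)‖ ≤ g(t) for all x, and suppose that for every α ∈ ℝ^d and t ∈ [0,T] the map t ↦ ∇Φ(X(α,t),t) is differentiable with derivative -G(X(α,t),t)ᵀ ∇Φ(X(α,t),t) - χ_{D_t}(X(α,t)) ∇Φ(X(α,t),t) (in the application G = ∇v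 and g(t) = ‖∇v(·,t)‖_∞). Then for every t ∈ [0,T]: (i) ‖∇Φ(·,t)‖_∞ ≤ ‖∇Φ(·,0)‖_∞ · exp(∫_0^t (1 + g(s)) ds); and (ii) inf_{x∈∂D_t} |∇Φ(x,t)| ≥ inf_{x∈∂D_0} |∇Φ(x,0)| · exp(-∫_0^t (1 + g(s)) ds). -/
/-!
Along a trajectory `s ↦ X α s` the gradient `F s = ∇Φ(X α s, s)` obeys `‖F'‖ ≤ (1 + g) ‖F‖`,
because the adjoint of `G` has the norm of `G` and the indicator is at most `1`. Grönwall's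
inequality, run forward and backward in time, gives `‖F t‖ ≤ ‖F 0‖ e^{∫(1+g)}` and
`‖F 0‖ ≤ ‖F t‖ e^{∫(1+g)}`; the first bound holds at every point since `X(·, t)` is onto, the
second on `∂D_t = X(∂D₀, t)`.

As `g` is merely integrable, Grönwall's inequality is proved by comparing `‖F‖` with the barrier
`δ e^{∫φ}`, where `φ > 1 + g` is lower semicontinuous with almost the same integral
(Vitali–Carathéodory): lower semicontinuity makes the right slopes of the barrier exceed those of
`‖F‖` wherever the two touch.
-/

open MeasureTheory Metric Set
open scoped RealInnerProductSpace

open Filter Topology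

theorem image_le_of_frequently_le_of_eq {f B : ℝ → ℝ} {a b : ℝ}
    (hf : ContinuousOn f (Icc a b)) (hB : ContinuousOn B (Icc a b)) (ha : f a ≤ B a)
    (contact : ∀ x ∈ Ico a b, f x = B x → ∃ᶠ z in 𝓝[>] x, f z ≤ B z) :
    ∀ ⦃x⦄, x ∈ Icc a b → f x ≤ B x := by
  have hfB : ContinuousOn (fun x => (f x, B x)) (Icc a b) := hf.prodMk hB
  have hclosed : IsClosed ({x | f x ≤ B x} ∩ Icc a b) := by
    rw [inter_comm]
    exact hfB.preimage_isClosed_of_isClosed isClosed_Icc OrderClosedTopology.isClosed_le'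
  refine fun x hx => hclosed.Icc_subset_of_forall_exists_gt ha ?_ hx
  rintro x ⟨hxB, hx⟩ y hy
  have hfreq : ∃ᶠ z in 𝓝[>] x, f z ≤ B z := by
    rcases (show f x ≤ B x from hxB).lt_or_eq with hlt | heq
    · have : ∀ᶠ z in 𝓝[Icc a b] x, f z < B z :=
        hfB x (Ico_subset_Icc_self hx) ((isOpen_lt continuous_fst continuous_snd).mem_nhds hlt)
      have : ∀ᶠ z in 𝓝[>] x, f z < B z := nhdsWithin_le_of_mem (Icc_mem_nhdsGT_of_mem hx) this
      exact this.frequently.mono fun _ => le_of_lt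
    · exact contact x hx heq
  exact (hfreq.and_eventually (Ioc_mem_nhdsGT hy)).exists

theorem eventually_mul_sub_le_integral_toReal {φ : ℝ → EReal} {a b x q : ℝ}
    (hφ : LowerSemicontinuous φ) (hφtop : ∀ᵐ y ∂volume.restrict (Icc a b), φ y < ⊤)
    (hint : IntervalIntegrable (fun y => (φ y).toReal) volume a b)
    (hx : x ∈ Ico a b) (hq : (q : EReal) < φ x) :
    ∀ᶠ z in 𝓝[>] x, q * (z - x) ≤ ∫ y in x..z, (φ y).toReal := by
  obtain ⟨l, u, ⟨hlx, hxu⟩, hlu⟩ := mem_nhds_iff_exists_Ioo_subset.1 (hφ x q hq)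
  filter_upwards [Ioo_mem_nhdsGT hxu, Ioc_mem_nhdsGT hx.2] with z hzu hzb
  have hsub : Icc x z ⊆ Icc a b := Icc_subset_Icc hx.1 hzb.2
  have hqφ : (fun _ => q) ≤ᵐ[volume.restrict (Icc x z)] fun y => (φ y).toReal := by
    filter_upwards [ae_restrict_of_ae_restrict_of_subset hsub hφtop,
      ae_restrict_mem measurableSet_Icc] with y hy hyI
    have : (q : EReal) < φ y := hlu ⟨by linarith [hyI.1], by linarith [hyI.2, hzu.2]⟩
    simpa using EReal.toReal_le_toReal this.le (EReal.coe_ne_bot q) hy.ne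
  have := intervalIntegral.integral_mono_ae_restrict hzu.1.le intervalIntegrable_const
    (hint.mono_set (by rw [uIcc_of_le hzu.1.le]; exact hsub.trans Icc_subset_uIcc)) hqφ
  simpa [mul_comm] using this

theorem mul_le_slope_mul_exp {u : ℝ → ℝ} {δ q x z : ℝ} (hδ : 0 ≤ δ) (hxz : x < z)
    (h : q * (z - x) ≤ u z - u x) :
    q * (δ * Real.exp (u x)) ≤ slope (fun y => δ * Real.exp (u y)) x z := by
  have hexp : Real.exp (u z) = Real.exp (u x) * Real.exp (u z - u x) := by
    rw [← Real.exp_add, add_sub_cancel]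
  rw [slope_def_field, le_div_iff₀ (sub_pos.2 hxz)]
  calc q * (δ * Real.exp (u x)) * (z - x) = δ * Real.exp (u x) * (q * (z - x)) := by ring
    _ ≤ δ * Real.exp (u x) * (Real.exp (u z - u x) - 1) := by
        gcongr; linarith [Real.add_one_le_exp (u z - u x)]
    _ = δ * Real.exp (u z) - δ * Real.exp (u x) := by rw [hexp]; ring

section Gronwall

variable {E : Type*} [NormedAddCommGroup E] [NormedSpace ℝ E]

theorem norm_le_mul_exp_integral_of_lt_lowerSemicontinuous {f f' : ℝ → E} {c : ℝ → ℝ}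
    {φ : ℝ → EReal} {a b δ : ℝ}
    (hf : ContinuousOn f (Icc a b))
    (hf' : ∀ x ∈ Ico a b, HasDerivWithinAt f (f' x) (Ici x) x)
    (hc : ∀ x ∈ Ico a b, ‖f' x‖ ≤ c x * ‖f x‖)
    (hφ : LowerSemicontinuous φ) (hcφ : ∀ x, (c x : EReal) < φ x)
    (hφtop : ∀ᵐ x ∂volume.restrict (Icc a b), φ x < ⊤)
    (hint : IntervalIntegrable (fun x => (φ x).toReal) volume a b)
    (hδ : 0 < δ) (hfa : ‖f a‖ ≤ δ) :
    ∀ ⦃x⦄, x ∈ Icc a b → ‖f x‖ ≤ δ * Real.exp (∫ s in a..x, (φ s).toReal) := by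
  set u : ℝ → ℝ := fun x => ∫ s in a..x, (φ s).toReal
  have hu : ContinuousOn u (Icc a b) :=
    (intervalIntegral.continuousOn_primitive_interval' hint left_mem_uIcc).mono Icc_subset_uIcc
  refine image_le_of_frequently_le_of_eq (continuous_norm.comp_continuousOn hf)
    (continuousOn_const.mul (Real.continuous_exp.comp_continuousOn hu)) (by simpa [u] using hfa) ?_
  intro x hx (hcontact : ‖f x‖ = δ * Real.exp (u x))
  obtain ⟨q, hcq, hqφ⟩ := EReal.exists_between_coe_real (hcφ x)
  have hfx : 0 < ‖f x‖ := hcontact ▸ by positivity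
  have hf'x : ‖f' x‖ < q * ‖f x‖ :=
    (hc x hx).trans_lt (mul_lt_mul_of_pos_right (by exact_mod_cast hcq) hfx)
  obtain ⟨r, hf'r, hrq⟩ := exists_between hf'x
  have hslopeB : ∀ᶠ z in 𝓝[>] x,
      q * (δ * Real.exp (u x)) ≤ slope (fun y => δ * Real.exp (u y)) x z := by
    filter_upwards [eventually_mul_sub_le_integral_toReal hφ hφtop hint hx hqφ,
      self_mem_nhdsWithin, Ioc_mem_nhdsGT hx.2] with z hqz hxz hzb
    refine mul_le_slope_mul_exp hδ.le hxz ?_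
    rwa [intervalIntegral.integral_interval_sub_left
      (hint.mono_set (uIcc_subset_uIcc_left (Icc_subset_uIcc ⟨hx.1.trans hxz.le, hzb.2⟩)))
      (hint.mono_set (uIcc_subset_uIcc_left (Icc_subset_uIcc (Ico_subset_Icc_self hx))))]
  refine (((hf' x hx).liminf_right_slope_norm_le hf'r).and_eventually
    (hslopeB.and self_mem_nhdsWithin)).mono ?_
  rintro z ⟨hfz, hBz, hxz : x < z⟩
  rw [slope_def_field, ← hcontact] at hBz
  have : (z - x)⁻¹ * (‖f z‖ - ‖f x‖) < (δ * Real.exp (u z) - ‖f x‖) / (z - x) := by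
    linarith
  rw [inv_mul_eq_div, div_lt_div_iff_of_pos_right (sub_pos.2 hxz)] at this
  linarith

theorem norm_le_norm_mul_exp_integral {f f' : ℝ → E} {c : ℝ → ℝ} {a b : ℝ} (hab : a ≤ b)
    (hf : ContinuousOn f (Icc a b))
    (hf' : ∀ x ∈ Ico a b, HasDerivWithinAt f (f' x) (Ici x) x)
    (hc : ∀ x ∈ Ico a b, ‖f' x‖ ≤ c x * ‖f x‖)
    (hcint : IntervalIntegrable c volume a b) :
    ‖f b‖ ≤ ‖f a‖ * Real.exp (∫ s in a..b, c s) := by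
  have integral_eq : ∀ ψ : ℝ → ℝ, ∫ s in a..b, ψ s = ∫ s, ψ s ∂volume.restrict (Icc a b) :=
    fun ψ => by rw [intervalIntegral.integral_of_le hab, integral_Icc_eq_integral_Ioc]
  have approx : ∀ ε > 0, ‖f b‖ ≤ (‖f a‖ + ε) * Real.exp ((∫ s in a..b, c s) + ε) := by
    intro ε hε
    have hcint' : Integrable c (volume.restrict (Icc a b)) := by
      rw [← IntegrableOn, integrableOn_Icc_iff_integrableOn_Ioc]
      exact (intervalIntegrable_iff_integrableOn_Ioc_of_le hab).1 hcint
    obtain ⟨φ, hcφ, hφ, hφint, hφtop, hφlt⟩ :=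
      exists_lt_lowerSemicontinuous_integral_lt c hcint' hε
    have hint : IntervalIntegrable (fun x => (φ x).toReal) volume a b := by
      rw [intervalIntegrable_iff_integrableOn_Ioc_of_le hab]
      exact IntegrableOn.mono_set hφint Ioc_subset_Icc_self
    refine (norm_le_mul_exp_integral_of_lt_lowerSemicontinuous hf hf' hc hφ hcφ hφtop hint
      (by positivity) (le_add_of_nonneg_right hε.le) (right_mem_Icc.2 hab)).trans ?_
    gcongr
    rw [integral_eq, integral_eq]
    exact hφlt.le
  have hlim : Tendsto (fun ε => (‖f a‖ + ε) * Real.exp ((∫ s in a..b, c s) + ε)) (𝓝[>] 0)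
      (𝓝 (‖f a‖ * Real.exp (∫ s in a..b, c s))) := by
    refine tendsto_nhdsWithin_of_tendsto_nhds ?_
    have : Continuous fun ε => (‖f a‖ + ε) * Real.exp ((∫ s in a..b, c s) + ε) := by fun_prop
    simpa using this.tendsto 0
  exact ge_of_tendsto hlim (eventually_nhdsWithin_of_forall approx)

theorem norm_le_norm_mul_exp_integral_rev {f f' : ℝ → E} {c : ℝ → ℝ} {a b : ℝ} (hab : a ≤ b)
    (hf : ∀ x ∈ Icc a b, HasDerivAt f (f' x) x)
    (hc : ∀ x ∈ Icc a b, ‖f' x‖ ≤ c x * ‖f x‖)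
    (hcint : IntervalIntegrable c volume a b) :
    ‖f a‖ ≤ ‖f b‖ * Real.exp (∫ s in a..b, c s) := by
  have hmem : ∀ x ∈ Icc a b, a + b - x ∈ Icc a b :=
    fun x hx => ⟨by linarith [hx.2], by linarith [hx.1]⟩
  have hrev : ∀ x ∈ Icc a b, HasDerivAt (fun y => f (a + b - y)) (-f' (a + b - x)) x :=
    fun x hx => by
      simpa [Function.comp_def] using
        (hf _ (hmem x hx)).scomp x ((hasDerivAt_id x).const_sub (a + b))
  have := norm_le_norm_mul_exp_integral hab (c := fun x => c (a + b - x))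
    (fun x hx => (hrev x hx).continuousAt.continuousWithinAt)
    (fun x hx => (hrev x (Ico_subset_Icc_self hx)).hasDerivWithinAt)
    (fun x hx => by simpa using hc _ (hmem x (Ico_subset_Icc_self hx)))
    (by simpa using (hcint.comp_sub_left (a + b)).symm)
  simpa [intervalIntegral.integral_comp_sub_left fun x => c x] using this

end Gronwall

theorem norm_neg_adjoint_sub_indicator_smul_le {α E : Type*} [NormedAddCommGroup E]
    [InnerProductSpace ℝ E] [CompleteSpace E] (A : E →L[ℝ] E) (s : Set α) (y : α) (v : E) :
    ‖-(ContinuousLinearMap.adjoint A v) - s.indicator (fun _ => (1 : ℝ)) y • v‖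
      ≤ (1 + ‖A‖) * ‖v‖ := by
  have hind : ‖s.indicator (fun _ => (1 : ℝ)) y‖ ≤ 1 := by
    by_cases hy : y ∈ s <;> simp [hy]
  calc ‖-(ContinuousLinearMap.adjoint A v) - s.indicator (fun _ => (1 : ℝ)) y • v‖
      ≤ ‖ContinuousLinearMap.adjoint A v‖ + ‖s.indicator (fun _ => (1 : ℝ)) y • v‖ := by
        simpa using norm_sub_le (-(ContinuousLinearMap.adjoint A v)) _
    _ ≤ ‖A‖ * ‖v‖ + 1 * ‖v‖ := by
        gcongr
        · simpa using (ContinuousLinearMap.adjoint A).le_opNorm v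
        · rw [norm_smul]; gcongr
    _ = (1 + ‖A‖) * ‖v‖ := by ring

theorem apriori_uniform_and_lower_bounds_general
    (d : ℕ)
    (T : ℝ)
    (D₀ : Set (EuclideanSpace ℝ (Fin d)))
    (X : EuclideanSpace ℝ (Fin d) → ℝ → EuclideanSpace ℝ (Fin d))
    (hX0 : ∀ α, X α 0 = α)
    (hXhomeo : ∀ t ∈ Set.Icc (0:ℝ) T,
      ∃ h : EuclideanSpace ℝ (Fin d) ≃ₜ EuclideanSpace ℝ (Fin d), ∀ α, h α = X α t)
    (hbd : ∀ t ∈ Set.Icc (0:ℝ) T,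
      frontier ((fun α => X α t) '' D₀) = (fun α => X α t) '' frontier D₀)
    (Φ : EuclideanSpace ℝ (Fin d) → ℝ → ℝ)
    (G : EuclideanSpace ℝ (Fin d) → ℝ →
      EuclideanSpace ℝ (Fin d) →L[ℝ] EuclideanSpace ℝ (Fin d))
    (g : ℝ → ℝ) (hgint : IntervalIntegrable g volume 0 T)
    (hGg : ∀ x : EuclideanSpace ℝ (Fin d), ∀ t ∈ Set.Icc (0:ℝ) T, ‖G x t‖ ≤ g t)
    (hode : ∀ α : EuclideanSpace ℝ (Fin d), ∀ t ∈ Set.Icc (0:ℝ) T,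
      HasDerivAt (fun s => gradient (fun z => Φ z s) (X α s))
        (-(ContinuousLinearMap.adjoint (G (X α t) t)
              (gradient (fun z => Φ z t) (X α t)))
          - Set.indicator ((fun α => X α t) '' D₀) (fun _ => (1:ℝ)) (X α t)
              • gradient (fun z => Φ z t) (X α t)) t) :
    (∀ C₀ : ℝ, (∀ x, ‖gradient (fun z => Φ z 0) x‖ ≤ C₀) →
      ∀ t ∈ Set.Icc (0:ℝ) T, ∀ x,
        ‖gradient (fun z => Φ z t) x‖
          ≤ C₀ * Real.exp (∫ s in (0:ℝ)..t, (1 + g s))) ∧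
    (∀ m : ℝ, (∀ x ∈ frontier D₀, m ≤ ‖gradient (fun z => Φ z 0) x‖) →
      ∀ t ∈ Set.Icc (0:ℝ) T, ∀ x ∈ frontier ((fun α => X α t) '' D₀),
        m * Real.exp (-∫ s in (0:ℝ)..t, (1 + g s))
          ≤ ‖gradient (fun z => Φ z t) x‖) := by
  have htraj : ∀ α, ∀ t ∈ Icc (0 : ℝ) T, ∀ s ∈ Icc 0 t, HasDerivAt _ _ s :=
    fun α t ht s hs => hode α s ⟨hs.1, hs.2.trans ht.2⟩
  have hrate : ∀ α, ∀ t ∈ Icc (0 : ℝ) T, ∀ s ∈ Icc 0 t,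
      ‖-(ContinuousLinearMap.adjoint (G (X α s) s) (gradient (fun z => Φ z s) (X α s)))
          - ((fun α => X α s) '' D₀).indicator (fun _ => (1:ℝ)) (X α s)
              • gradient (fun z => Φ z s) (X α s)‖
        ≤ (1 + g s) * ‖gradient (fun z => Φ z s) (X α s)‖ := fun α t ht s hs =>
    (norm_neg_adjoint_sub_indicator_smul_le _ _ _ _).trans <| by
      gcongr; exact hGg _ s ⟨hs.1, hs.2.trans ht.2⟩
  have hint : ∀ t ∈ Icc (0 : ℝ) T, IntervalIntegrable (fun s => 1 + g s) volume 0 t :=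
    fun t ht => intervalIntegrable_const.add
      (hgint.mono_set (uIcc_subset_uIcc_left (Icc_subset_uIcc ht)))
  refine ⟨fun C₀ hC₀ t ht x => ?_, fun m hm t ht x hx => ?_⟩
  · obtain ⟨h, hh⟩ := hXhomeo t ht
    obtain ⟨α, rfl⟩ : ∃ α, X α t = x := ⟨h.symm x, by rw [← hh, h.apply_symm_apply]⟩
    have := norm_le_norm_mul_exp_integral ht.1
      (fun s hs => (htraj α t ht s hs).continuousAt.continuousWithinAt)
      (fun s hs => (htraj α t ht s (Ico_subset_Icc_self hs)).hasDerivWithinAt)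
      (fun s hs => hrate α t ht s (Ico_subset_Icc_self hs)) (hint t ht)
    rw [hX0] at this
    exact this.trans (by gcongr; exact hC₀ α)
  · rw [hbd t ht] at hx
    obtain ⟨α, hα, rfl⟩ := hx
    have := norm_le_norm_mul_exp_integral_rev ht.1 (htraj α t ht) (hrate α t ht) (hint t ht)
    rw [hX0] at this
    rw [Real.exp_neg, ← div_eq_mul_inv, div_le_iff₀ (Real.exp_pos _)]
    exact (hm α hα).trans this

/-- A priori uniform and lower bounds for the gradient of the transported defining
function (Theorem 7.1, estimates (7.2) and (7.3)). -/
theorem apriori_uniform_and_lower_bounds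
    (d : ℕ) (hd : 2 ≤ d) (γ : ℝ) (hγ : γ ∈ Set.Ioo (0:ℝ) 1)
    (T : ℝ) (hT : 0 < T)
    (D₀ : Set (EuclideanSpace ℝ (Fin d))) (hD₀ : IsC1Domain d γ D₀)
    (X : EuclideanSpace ℝ (Fin d) → ℝ → EuclideanSpace ℝ (Fin d))
    (hXcont : Continuous fun p : EuclideanSpace ℝ (Fin d) × ℝ => X p.1 p.2)
    (hX0 : ∀ α, X α 0 = α)
    (hXhomeo : ∀ t ∈ Set.Icc (0:ℝ) T,
      ∃ h : EuclideanSpace ℝ (Fin d) ≃ₜ EuclideanSpace ℝ (Fin d), ∀ α, h α = X α t)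
    (hDt : ∀ t ∈ Set.Icc (0:ℝ) T, IsC1Domain d γ ((fun α => X α t) '' D₀))
    (hbd : ∀ t ∈ Set.Icc (0:ℝ) T,
      frontier ((fun α => X α t) '' D₀) = (fun α => X α t) '' frontier D₀)
    (v : EuclideanSpace ℝ (Fin d) → ℝ → EuclideanSpace ℝ (Fin d))
    (hv : ∀ x t, v x t = -(∫ y in (fun α => X α t) '' D₀, gradN d (x - y)))
    (hflow : ∀ α, ∀ t ∈ Set.Icc (0:ℝ) T, HasDerivAt (fun s => X α s) (v (X α t) t) t)
    (Φ : EuclideanSpace ℝ (Fin d) → ℝ → ℝ)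
    (hΦcont : Continuous fun p : EuclideanSpace ℝ (Fin d) × ℝ => Φ p.1 p.2)
    (hΦdef : ∀ t ∈ Set.Icc (0:ℝ) T,
      IsDefining d γ ((fun α => X α t) '' D₀) (fun z => Φ z t))
    (G : EuclideanSpace ℝ (Fin d) → ℝ →
      EuclideanSpace ℝ (Fin d) →L[ℝ] EuclideanSpace ℝ (Fin d))
    (g : ℝ → ℝ) (hg0 : ∀ t, 0 ≤ g t) (hgint : IntervalIntegrable g volume 0 T)
    (hGg : ∀ x : EuclideanSpace ℝ (Fin d), ∀ t ∈ Set.Icc (0:ℝ) T, ‖G x t‖ ≤ g t)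
    (hode : ∀ α : EuclideanSpace ℝ (Fin d), ∀ t ∈ Set.Icc (0:ℝ) T,
      HasDerivAt (fun s => gradient (fun z => Φ z s) (X α s))
        (-(ContinuousLinearMap.adjoint (G (X α t) t)
              (gradient (fun z => Φ z t) (X α t)))
          - Set.indicator ((fun α => X α t) '' D₀) (fun _ => (1:ℝ)) (X α t)
              • gradient (fun z => Φ z t) (X α t)) t) :
    (∀ C₀ : ℝ, (∀ x, ‖gradient (fun z => Φ z 0) x‖ ≤ C₀) →
      ∀ t ∈ Set.Icc (0:ℝ) T, ∀ x,
        ‖gradient (fun z => Φ z t) x‖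
          ≤ C₀ * Real.exp (∫ s in (0:ℝ)..t, (1 + g s))) ∧
    (∀ m : ℝ, (∀ x ∈ frontier D₀, m ≤ ‖gradient (fun z => Φ z 0) x‖) →
      ∀ t ∈ Set.Icc (0:ℝ) T, ∀ x ∈ frontier ((fun α => X α t) '' D₀),
        m * Real.exp (-∫ s in (0:ℝ)..t, (1 + g s))
          ≤ ‖gradient (fun z => Φ z t) x‖) :=
  apriori_uniform_and_lower_bounds_general d T D₀ X hX0 hXhomeo hbd Φ G g hgint hGg hode
end

section
/- One-sided boundary limits act tangentially: let D ⊂ ℝ^d be open, x ∈ ∂D, and let F : ℝ^d → ℝ^d be continuous. Assume the restriction of F to D is differentiable with derivative DF continuous on D, and that DF extends continuously from D to (D ∪ (∂D ∩ V)) for some open neighborhood V of x, with boundary values M(y) (a continuous family of linear maps ℝ^d → ℝ^d for y ∈ ∂D ∩ V). Let z : (-a,a) → ∂D ∩ V be a C¹ curve with z(0) = x, and suppose there exist a unit vector n ∈ ℝ^d and ε ∈ (0,a) such that z(θ) - η n ∈ D for all |θ| < ε and 0 < η < ε. Then θ ↦ F(z(θ)) is differentiable on (-ε,ε) with derivative M(z(θ))(z'(θ));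 in particular the interior one-sided limit M(x) of DF agrees on the tangent vector z'(0) with the derivative of F along the boundary: (F∘z)'(0) = M(x)(z'(0)). -/
open MeasureTheory Metric Set

/-- One-sided boundary limits of the differential act tangentially. -/
theorem boundary_limit_acts_tangentially
    (d : ℕ)
    (D : Set (EuclideanSpace ℝ (Fin d))) (hD : IsOpen D)
    (x : EuclideanSpace ℝ (Fin d)) (hx : x ∈ frontier D)
    (F : EuclideanSpace ℝ (Fin d) → EuclideanSpace ℝ (Fin d)) (hF : Continuous F)
    (hFdiff : ∀ y ∈ D, DifferentiableAt ℝ F y)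
    (hDFcont : ContinuousOn (fun y => fderiv ℝ F y) D)
    (V : Set (EuclideanSpace ℝ (Fin d))) (hV : IsOpen V) (hxV : x ∈ V)
    (M : EuclideanSpace ℝ (Fin d) →
      EuclideanSpace ℝ (Fin d) →L[ℝ] EuclideanSpace ℝ (Fin d))
    (hMcont : ContinuousOn M (frontier D ∩ V))
    (hMlim : ∀ y ∈ frontier D ∩ V,
      Filter.Tendsto (fun w => fderiv ℝ F w) (nhdsWithin y D) (nhds (M y)))
    (a : ℝ) (ha : 0 < a)
    (z z' : ℝ → EuclideanSpace ℝ (Fin d))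
    (hzmem : ∀ θ ∈ Set.Ioo (-a) a, z θ ∈ frontier D ∩ V)
    (hz : ∀ θ ∈ Set.Ioo (-a) a, HasDerivAt z (z' θ) θ)
    (hz'cont : ContinuousOn z' (Set.Ioo (-a) a))
    (hz0 : z 0 = x)
    (n : EuclideanSpace ℝ (Fin d)) (hn : ‖n‖ = 1)
    (ε : ℝ) (hε : ε ∈ Set.Ioo (0:ℝ) a)
    (hin : ∀ θ : ℝ, |θ| < ε → ∀ η : ℝ, 0 < η → η < ε → z θ - η • n ∈ D) :
    (∀ θ ∈ Set.Ioo (-ε) ε, HasDerivAt (fun s => F (z s)) (M (z θ) (z' θ)) θ) ∧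
    HasDerivAt (fun s => F (z s)) (M x (z' 0)) 0 := by
  obtain ⟨hε0, hεa⟩ := hε
  have hsub : Set.Ioo (-ε) ε ⊆ Set.Ioo (-a) a :=
    Set.Ioo_subset_Ioo (by linarith) hεa.le
  have hz_cont : ContinuousOn z (Set.Ioo (-a) a) := fun s hs =>
    ((hz s hs).continuousAt).continuousWithinAt
  have h0ε : (0:ℝ) ∈ Set.Ioo (-ε) ε := ⟨by linarith, hε0⟩
  have hfcont : ContinuousOn (fun s => M (z s) (z' s)) (Set.Ioo (-a) a) :=
    (hMcont.comp hz_cont (fun s hs => hzmem s hs)).clm_apply hz'cont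
  have eqn : ∀ u ∈ Set.Ioo (-ε) ε,
      F (z u) - F x = ∫ s in (0:ℝ)..u, M (z s) (z' s) := by
    intro u hu
    have hJε : Set.uIcc (0:ℝ) u ⊆ Set.Ioo (-ε) ε :=
      Set.ordConnected_Ioo.uIcc_subset h0ε hu
    have hJa : Set.uIcc (0:ℝ) u ⊆ Set.Ioo (-a) a := hJε.trans hsub
    have habs : ∀ s ∈ Set.uIcc (0:ℝ) u, |s| < ε := fun s hs =>
      abs_lt.mpr ⟨(hJε hs).1, (hJε hs).2⟩
    -- the compact image of the curve
    have hKcomp : IsCompact (z '' Set.uIcc (0:ℝ) u) :=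
      isCompact_uIcc.image_of_continuousOn (hz_cont.mono hJa)
    have hKsub : z '' Set.uIcc (0:ℝ) u ⊆ frontier D ∩ V := by
      rintro _ ⟨s, hs, rfl⟩; exact hzmem s (hJa hs)
    obtain ⟨C₀, hC₀⟩ := hKcomp.exists_bound_of_continuousOn (hMcont.mono hKsub)
    -- local bound on the derivative near each boundary point of the curve
    have hU : ∀ y ∈ z '' Set.uIcc (0:ℝ) u, ∃ U, IsOpen U ∧ y ∈ U ∧
        ∀ w ∈ U ∩ D, ‖fderiv ℝ F w‖ ≤ C₀ + 1 := by
      intro y hy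
      have h1 := (hMlim y (hKsub hy)) (Metric.ball_mem_nhds (M y) one_pos)
      rw [Filter.mem_map, mem_nhdsWithin] at h1
      obtain ⟨U, hUo, hyU, hUb⟩ := h1
      refine ⟨U, hUo, hyU, fun w hw => ?_⟩
      have h2 := hUb hw
      simp only [Set.mem_preimage, Metric.mem_ball, dist_eq_norm] at h2
      have h3 : ‖fderiv ℝ F w‖ ≤ ‖fderiv ℝ F w - M y‖ + ‖M y‖ := by
        calc ‖fderiv ℝ F w‖ = ‖(fderiv ℝ F w - M y) + M y‖ := by rw [sub_add_cancel]
          _ ≤ ‖fderiv ℝ F w - M y‖ + ‖M y‖ := norm_add_le _ _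
      have := hC₀ y hy
      linarith
    choose! U hUo hyU hUb using hU
    have hKU : z '' Set.uIcc (0:ℝ) u ⊆ ⋃ y ∈ z '' Set.uIcc (0:ℝ) u, U y :=
      fun y hy => Set.mem_biUnion hy (hyU y hy)
    obtain ⟨δ, hδ0, hδ⟩ := hKcomp.exists_thickening_subset_open
      (isOpen_biUnion fun y hy => hUo y hy) hKU
    have hbound : ∀ s ∈ Set.uIcc (0:ℝ) u, ∀ η : ℝ, 0 < η → η < δ → η < ε →
        ‖fderiv ℝ F (z s - η • n)‖ ≤ C₀ + 1 := by
      intro s hs η hη0 hηδ hηε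
      have hwD : z s - η • n ∈ D := hin s (habs s hs) η hη0 hηε
      have hthick : z s - η • n ∈ Metric.thickening δ (z '' Set.uIcc (0:ℝ) u) := by
        rw [Metric.mem_thickening_iff]
        refine ⟨z s, Set.mem_image_of_mem z hs, ?_⟩
        rw [dist_eq_norm]
        have : z s - η • n - z s = -(η • n) := by abel
        rw [this, norm_neg, norm_smul, hn, Real.norm_eq_abs, abs_of_pos hη0, mul_one]
        exact hηδ
      obtain ⟨y, hy, hwU⟩ := Set.mem_iUnion₂.mp (hδ hthick)
      exact hUb y hy _ ⟨hwU, hwD⟩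
    -- a sequence of inward shifts tending to 0
    set η : ℕ → ℝ := fun k => min δ ε / (k + 2) with hηdef
    have hηpos : ∀ k, 0 < η k := fun k => div_pos (lt_min hδ0 hε0) (by positivity)
    have hηlt : ∀ k, η k < min δ ε := by
      intro k
      have h1 : (1:ℝ) < (k:ℝ) + 2 := by
        have := Nat.cast_nonneg (α := ℝ) k; linarith
      exact div_lt_self (lt_min hδ0 hε0) h1
    have hηδ : ∀ k, η k < δ := fun k => (hηlt k).trans_le (min_le_left _ _)
    have hηε : ∀ k, η k < ε := fun k => (hηlt k).trans_le (min_le_right _ _)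
    have hηtendsto : Filter.Tendsto η Filter.atTop (nhds 0) := by
      have h1 : Filter.Tendsto (fun k : ℕ => (k:ℝ) + 2) Filter.atTop Filter.atTop :=
        Filter.tendsto_atTop_add_const_right _ 2 tendsto_natCast_atTop_atTop
      exact Filter.Tendsto.div_atTop tendsto_const_nhds h1
    -- FTC for each shifted curve
    have hFTC : ∀ k : ℕ, (∫ s in (0:ℝ)..u, fderiv ℝ F (z s - η k • n) (z' s))
        = F (z u - η k • n) - F (z 0 - η k • n) := by
      intro k
      refine intervalIntegral.integral_eq_sub_of_hasDerivAt (f := fun s' => F (z s' - η k • n)) (fun s hs => ?_) ?_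
      · have h1 : HasDerivAt (fun s' => z s' - η k • n) (z' s) s :=
          (hz s (hJa hs)).sub_const _
        have h2 : HasFDerivAt F (fderiv ℝ F (z s - η k • n)) (z s - η k • n) :=
          (hFdiff _ (hin s (habs s hs) _ (hηpos k) (hηε k))).hasFDerivAt
        exact h2.comp_hasDerivAt s h1
      · apply ContinuousOn.intervalIntegrable
        exact (hDFcont.comp ((hz_cont.mono hJa).sub continuousOn_const)
          (fun s hs => hin s (habs s hs) _ (hηpos k) (hηε k))).clm_apply
          (hz'cont.mono hJa)
    -- continuity of the shifted integrands
    have hshiftcont : ∀ k : ℕ, ContinuousOn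
        (fun s => fderiv ℝ F (z s - η k • n) (z' s)) (Set.uIcc (0:ℝ) u) := fun k =>
      (hDFcont.comp ((hz_cont.mono hJa).sub continuousOn_const)
        (fun s hs => hin s (habs s hs) _ (hηpos k) (hηε k))).clm_apply
        (hz'cont.mono hJa)
    -- dominated convergence
    have hlim1 : Filter.Tendsto
        (fun k => ∫ s in (0:ℝ)..u, fderiv ℝ F (z s - η k • n) (z' s))
        Filter.atTop (nhds (∫ s in (0:ℝ)..u, M (z s) (z' s))) := by
      apply intervalIntegral.tendsto_integral_filter_of_dominated_convergence
        (bound := fun s => (C₀ + 1) * ‖z' s‖)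
      · refine Filter.Eventually.of_forall (fun k => ?_)
        exact ((hshiftcont k).mono Set.uIoc_subset_uIcc).aestronglyMeasurable
          measurableSet_uIoc
      · refine Filter.Eventually.of_forall (fun k => ?_)
        refine Filter.Eventually.of_forall (fun s hs => ?_)
        have hsJ : s ∈ Set.uIcc (0:ℝ) u := Set.uIoc_subset_uIcc hs
        calc ‖fderiv ℝ F (z s - η k • n) (z' s)‖
            ≤ ‖fderiv ℝ F (z s - η k • n)‖ * ‖z' s‖ :=
              ContinuousLinearMap.le_opNorm _ _
          _ ≤ (C₀ + 1) * ‖z' s‖ :=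
              mul_le_mul_of_nonneg_right
                (hbound s hsJ _ (hηpos k) (hηδ k) (hηε k)) (norm_nonneg _)
      · exact (continuousOn_const.mul ((hz'cont.mono hJa).norm)).intervalIntegrable
      · refine Filter.Eventually.of_forall (fun s hs => ?_)
        have hsJ : s ∈ Set.uIcc (0:ℝ) u := Set.uIoc_subset_uIcc hs
        have h1 : Filter.Tendsto (fun k => z s - η k • n) Filter.atTop
            (nhdsWithin (z s) D) := by
          apply tendsto_nhdsWithin_of_tendsto_nhds_of_eventually_within
          · have h2 : Filter.Tendsto (fun k => η k • n) Filter.atTop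
                (nhds ((0:ℝ) • n)) := hηtendsto.smul_const n
            have h3 : Filter.Tendsto (fun k => z s - η k • n) Filter.atTop
                (nhds (z s - (0:ℝ) • n)) := tendsto_const_nhds.sub h2
            simpa using h3
          · exact Filter.Eventually.of_forall fun k =>
              hin s (habs s hsJ) _ (hηpos k) (hηε k)
        have h4 : Filter.Tendsto (fun k => fderiv ℝ F (z s - η k • n))
            Filter.atTop (nhds (M (z s))) :=
          (hMlim (z s) (hzmem s (hJa hsJ))).comp h1
        exact (((ContinuousLinearMap.apply ℝ (EuclideanSpace ℝ (Fin d))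
          (z' s)).continuous.tendsto (M (z s))).comp h4)
    -- the other side of FTC converges by continuity of F
    have hlim2 : Filter.Tendsto
        (fun k => ∫ s in (0:ℝ)..u, fderiv ℝ F (z s - η k • n) (z' s))
        Filter.atTop (nhds (F (z u) - F x)) := by
      simp only [hFTC]
      have hb : ∀ v : EuclideanSpace ℝ (Fin d),
          Filter.Tendsto (fun k => F (v - η k • n)) Filter.atTop (nhds (F v)) := by
        intro v
        have h2 : Filter.Tendsto (fun k => η k • n) Filter.atTop
            (nhds ((0:ℝ) • n)) := hηtendsto.smul_const n
        have h3 : Filter.Tendsto (fun k => v - η k • n) Filter.atTop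
            (nhds (v - (0:ℝ) • n)) := tendsto_const_nhds.sub h2
        have h3' : Filter.Tendsto (fun k => v - η k • n) Filter.atTop (nhds v) := by
          simpa using h3
        exact (hF.tendsto v).comp h3'
      have h5 := (hb (z u)).sub (hb (z 0))
      convert h5 using 2
      rw [hz0]
    exact (tendsto_nhds_unique hlim2 hlim1)
  -- now deduce the derivative statement
  have key : ∀ θ ∈ Set.Ioo (-ε) ε,
      HasDerivAt (fun s => F (z s)) (M (z θ) (z' θ)) θ := by
    intro θ hθ
    have hθa := hsub hθ
    have hJ : Set.uIcc (0:ℝ) θ ⊆ Set.Ioo (-a) a :=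
      (Set.ordConnected_Ioo.uIcc_subset h0ε hθ).trans hsub
    have hint : IntervalIntegrable (fun s => M (z s) (z' s)) volume 0 θ :=
      (hfcont.mono hJ).intervalIntegrable
    have hmeas : StronglyMeasurableAtFilter (fun s => M (z s) (z' s)) (nhds θ) :=
      hfcont.stronglyMeasurableAtFilter isOpen_Ioo θ hθa
    have hd : HasDerivAt (fun v => ∫ s in (0:ℝ)..v, M (z s) (z' s))
        (M (z θ) (z' θ)) θ :=
      intervalIntegral.integral_hasDerivAt_right hint hmeas
        (hfcont.continuousAt (isOpen_Ioo.mem_nhds hθa))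
    have hd2 : HasDerivAt (fun v => F x + ∫ s in (0:ℝ)..v, M (z s) (z' s))
        (M (z θ) (z' θ)) θ := hd.const_add (F x)
    refine hd2.congr_of_eventuallyEq ?_
    filter_upwards [isOpen_Ioo.mem_nhds hθ] with v hv
    exact sub_eq_iff_eq_add'.mp (eqn v hv)
  refine ⟨key, ?_⟩
  have h := key 0 h0ε
  rwa [hz0] at h
end

section
/- Grönwall estimate for the spatial gradient of the flow: let d ≥ 2, γ ∈ (0,1), q > 0, T > 0 and let D₀ ⊂ ℝ^d be open. Let v : ℝ^d × [0,T] → ℝ^d be continuous, and X : ℝ^d × [0,T] → ℝ^d satisfy X(α,t) = α + ∫_0^t v(X(α,τ),τ) dτ for all α, t. Assume that for each τ ∈ [0,T]: v(·,τ) is differentiable with ‖∇v(x,τ)‖ ≤ q for all x, and ‖∇v(x₁,τ) - ∇v(x₂,τ)‖ ≤ q |x₁-x₂|^γ whenever x₁, x₂ ∈ X(D₀,τ); assume also that X(·,τ) is differentiable on D₀ and its derivative satisfies ∇X(α,t) = I + ∫_0^t ∇v(X(α,τ),τ) ∘ ∇X(α,τ) dτ for α ∈ D₀. Then for every α, β ∈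 D₀ and t ∈ [0,T]: ‖∇X(α,t)‖ ≤ e^{qt} and ‖∇X(α,t) - ∇X(β,t)‖ ≤ (1/γ) e^{q(γ+1)t} |α-β|^γ. -/
/-!
Both bounds come from Grönwall's inequality for integral equations. The gradient
`Φ_α(t) = ∇X(α, t)` solves the linear equation `Φ = I + ∫ ∇v(X) ∘ Φ`, which gives
`‖Φ_α(t)‖ ≤ e^{qt}`; in the same way the flow itself is `e^{qt}`-Lipschitz in `α`. Writing
`∇v(X_α) Φ_α - ∇v(X_β) Φ_β = ∇v(X_α) (Φ_α - Φ_β) + (∇v(X_α) - ∇v(X_β)) Φ_β`, the Hölder bound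
on `∇v` and the Lipschitz bound on the flow give
`‖Φ_α - Φ_β‖(t) ≤ ∫₀ᵗ (q ‖Φ_α - Φ_β‖ + q |α - β|^γ e^{q(γ+1)τ}) dτ`, whose solution is dominated
by the supersolution `γ⁻¹ |α - β|^γ e^{q(γ+1)t}`.

Since an interval integral of a non-integrable function is `0`, integrability of the integrands
has to be established first. On the largest interval `[0, c]` on which the integrand is
integrable, Grönwall bounds the solution; beyond `c` the equation says the solution is constant.
Either way the integrand is bounded, hence integrable on all of `[0, T]`.
-/

open MeasureTheory Set Filter Topology intervalIntegral Real

theorem le_of_le_add_integral_of_hasDerivAt {u f ψ ψ' : ℝ → ℝ} {K δ t : ℝ} (hK : 0 ≤ K)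
    (hu : ContinuousOn u (Icc 0 t)) (hf : Continuous f)
    (hψ : ∀ s, HasDerivAt ψ (ψ' s) s) (hψ' : ∀ s ∈ Icc 0 t, K * ψ s + f s ≤ ψ' s)
    (hδ : δ ≤ ψ 0) (h : ∀ s ∈ Icc 0 t, u s ≤ δ + ∫ r in 0..s, (K * u r + f r)) :
    ∀ s ∈ Icc 0 t, u s ≤ ψ s := by
  intro s hs
  have ht : 0 ≤ t := hs.1.trans hs.2
  -- extend `u` continuously to `ℝ`, so that the primitive `φ` is differentiable everywhere
  set ū : ℝ → ℝ := IccExtend ht (u ∘ Subtype.val)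
  have hū : Continuous ū := hu.comp_continuous (continuous_subtype_val.comp continuous_projIcc)
    fun _ => Subtype.prop _
  have hūu : ∀ r ∈ Icc 0 t, ū r = u r := fun r hr => IccExtend_of_mem ht _ hr
  set φ : ℝ → ℝ := fun s => δ + ∫ r in 0..s, (K * ū r + f r)
  have hφ : ∀ s, HasDerivAt φ (K * ū s + f s) s := fun s =>
    (((continuous_const.mul hū).add hf).integral_hasStrictDerivAt 0 s).hasDerivAt.const_add δ
  have hφu : ∀ r ∈ Icc 0 t, u r ≤ φ r := fun r hr => by
    refine (h r hr).trans_eq (congrArg _ (integral_congr fun x hx => ?_))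
    rw [uIcc_of_le hr.1] at hx
    simp only [hūu x ⟨hx.1, hx.2.trans hr.2⟩]
  have hφψ := le_gronwallBound_of_liminf_deriv_right_le (f := φ - ψ) (δ := 0) (K := K) (ε := 0)
    ((continuous_iff_continuousAt.2 fun r => (hφ r).continuousAt).sub
      (continuous_iff_continuousAt.2 fun r => (hψ r).continuousAt)).continuousOn
    (fun r _ _ hr => ((hφ r).sub (hψ r)).hasDerivWithinAt.liminf_right_slope_le hr)
    (by simpa [φ] using hδ)
    (fun r hr => by
      have hr' : r ∈ Icc 0 t := Ico_subset_Icc_self hr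
      have := mul_le_mul_of_nonneg_left (hφu r hr') hK
      have := hψ' r hr'
      simp only [Pi.sub_apply, hūu r hr']
      linarith) s hs
  rw [gronwallBound_ε0_δ0] at hφψ
  linarith [hφu s hs, show φ s - ψ s ≤ 0 from hφψ]

theorem hasDerivAt_const_mul_exp (c k s : ℝ) :
    HasDerivAt (fun s => c * exp (k * s)) (k * (c * exp (k * s))) s :=
  (((hasDerivAt_id' s).const_mul k).exp.const_mul c).congr_deriv (by ring)

theorem ContinuousLinearMap.opNorm_comp_le_of_le {E F G : Type*} [SeminormedAddCommGroup E]
    [SeminormedAddCommGroup F] [SeminormedAddCommGroup G] [NormedSpace ℝ E] [NormedSpace ℝ F]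
    [NormedSpace ℝ G] {L : F →L[ℝ] G} {M : E →L[ℝ] F} {a b : ℝ} (hL : ‖L‖ ≤ a) (hM : ‖M‖ ≤ b) :
    ‖L.comp M‖ ≤ a * b :=
  (L.opNorm_comp_le M).trans (mul_le_mul hL hM (norm_nonneg _) ((norm_nonneg _).trans hL))

section IntegralEquation

variable {E : Type*} [NormedAddCommGroup E]

theorem MeasureTheory.IntegrableOn.intervalIntegrable_of_mem_Icc {g : ℝ → E} {a b s : ℝ}
    (hg : IntegrableOn g (Icc a b)) (hs : s ∈ Icc a b) : IntervalIntegrable g volume a s :=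
  (intervalIntegrable_iff_integrableOn_Icc_of_le hs.1).2 (hg.mono_set (Icc_subset_Icc_right hs.2))

theorem integrableOn_Ioc_of_tendsto {g : ℝ → E} {a b : ℕ → ℝ} {a₀ b₀ M : ℝ}
    (hg : ∀ n, IntegrableOn g (Ioc (a n) (b n))) (hab : ∀ n, Ioc (a n) (b n) ⊆ Ioc a₀ b₀)
    (ha : Tendsto a atTop (𝓝 a₀)) (hb : Tendsto b atTop (𝓝 b₀))
    (hM : ∀ t ∈ Ioc a₀ b₀, ‖g t‖ ≤ M) : IntegrableOn g (Ioc a₀ b₀) := by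
  refine integrableOn_Ioc_of_intervalIntegral_norm_bounded
    (I := max M 0 * volume.real (Ioc a₀ b₀)) hg ha hb (Eventually.of_forall fun n => ?_)
  calc ∫ t in Ioc (a n) (b n), ‖g t‖
      ≤ ‖∫ t in Ioc (a n) (b n), ‖g t‖‖ := le_abs_self _
    _ ≤ max M 0 * volume.real (Ioc (a n) (b n)) :=
      norm_setIntegral_le_of_norm_le_const measure_Ioc_lt_top fun t ht => by
        simpa using (hM t (hab n ht)).trans (le_max_left M 0)
    _ ≤ max M 0 * volume.real (Ioc a₀ b₀) :=
      mul_le_mul_of_nonneg_left (measureReal_mono (hab n) measure_Ioc_lt_top.ne) (le_max_right M 0)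

theorem integrableOn_Ioc_of_forall_Icc {g : ℝ → E} {c T M : ℝ} (hcT : c < T)
    (hg : ∀ s ∈ Ioo c T, AEStronglyMeasurable g (volume.restrict (Icc s T)))
    (hM : ∀ t ∈ Ioc c T, ‖g t‖ ≤ M) : IntegrableOn g (Ioc c T) := by
  obtain ⟨w, -, hw, hwc⟩ := exists_seq_strictAnti_tendsto' hcT
  have hwT : ∀ n, Icc (w n) T ⊆ Ioc c T := fun n t ht => ⟨(hw n).1.trans_le ht.1, ht.2⟩
  refine integrableOn_Ioc_of_tendsto (b := fun _ => T) (fun n => ?_)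
    (fun n => Ioc_subset_Icc_self.trans (hwT n)) hwc tendsto_const_nhds hM
  exact IntegrableOn.mono_set (Integrable.of_bound (hg _ (hw n)) M
    ((ae_restrict_iff' measurableSet_Icc).2 (Eventually.of_forall fun t ht => hM t (hwT n ht))))
    Ioc_subset_Icc_self

variable [NormedSpace ℝ E]

theorem continuousOn_of_eq_add_integral {Y g : ℝ → E} {Y₀ : E} {t : ℝ}
    (hY : ∀ s ∈ Icc 0 t, Y s = Y₀ + ∫ r in 0..s, g r) (hg : IntegrableOn g (Icc 0 t)) :
    ContinuousOn Y (Icc 0 t) := by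
  intro s hs
  rw [← uIcc_of_le (hs.1.trans hs.2)] at hg
  exact ((continuousOn_const.add ((continuousOn_primitive_interval hg).mono Icc_subset_uIcc)).congr
    hY) s hs

theorem sub_eq_add_integral_sub {Y₁ Y₂ g₁ g₂ : ℝ → E} {Y₁₀ Y₂₀ : E} {T : ℝ}
    (hY₁ : ∀ s ∈ Icc 0 T, Y₁ s = Y₁₀ + ∫ r in 0..s, g₁ r)
    (hY₂ : ∀ s ∈ Icc 0 T, Y₂ s = Y₂₀ + ∫ r in 0..s, g₂ r)
    (hg₁ : IntegrableOn g₁ (Icc 0 T)) (hg₂ : IntegrableOn g₂ (Icc 0 T)) :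
    ∀ s ∈ Icc 0 T, Y₁ s - Y₂ s = (Y₁₀ - Y₂₀) + ∫ r in 0..s, (g₁ r - g₂ r) := fun s hs => by
  rw [hY₁ s hs, hY₂ s hs, integral_sub (hg₁.intervalIntegrable_of_mem_Icc hs)
    (hg₂.intervalIntegrable_of_mem_Icc hs)]
  abel

theorem norm_le_of_eq_add_integral {Y g : ℝ → E} {Y₀ : E} {f ψ ψ' : ℝ → ℝ} {K t : ℝ}
    (hK : 0 ≤ K) (hY : ∀ s ∈ Icc 0 t, Y s = Y₀ + ∫ r in 0..s, g r)
    (hg : IntegrableOn g (Icc 0 t)) (hgY : ∀ s ∈ Icc 0 t, ‖g s‖ ≤ K * ‖Y s‖ + f s)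
    (hf : Continuous f) (hψ : ∀ s, HasDerivAt ψ (ψ' s) s)
    (hψ' : ∀ s ∈ Icc 0 t, K * ψ s + f s ≤ ψ' s) (hY₀ : ‖Y₀‖ ≤ ψ 0) :
    ∀ s ∈ Icc 0 t, ‖Y s‖ ≤ ψ s := by
  have hYc := continuousOn_of_eq_add_integral hY hg
  refine le_of_le_add_integral_of_hasDerivAt hK hYc.norm hf hψ hψ' hY₀ fun s hs => ?_
  have hsub : Icc 0 s ⊆ Icc 0 t := Icc_subset_Icc_right hs.2
  calc ‖Y s‖ ≤ ‖Y₀‖ + ‖∫ r in 0..s, g r‖ := hY s hs ▸ norm_add_le _ _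
    _ ≤ ‖Y₀‖ + ∫ r in 0..s, ‖g r‖ := by gcongr; exact norm_integral_le_integral_norm hs.1
    _ ≤ ‖Y₀‖ + ∫ r in 0..s, (K * ‖Y r‖ + f r) := by
      gcongr
      refine integral_mono_on hs.1 (hg.intervalIntegrable_of_mem_Icc hs).norm ?_
        fun r hr => hgY r (hsub hr)
      refine ContinuousOn.intervalIntegrable ?_
      rw [uIcc_of_le hs.1]
      exact (continuousOn_const.mul (hYc.mono hsub).norm).add hf.continuousOn

theorem norm_le_mul_exp_of_eq_add_integral {Y g : ℝ → E} {Y₀ : E} {a b t : ℝ} (ha : 0 ≤ a)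
    (hb : 0 ≤ b) (hY : ∀ s ∈ Icc 0 t, Y s = Y₀ + ∫ r in 0..s, g r)
    (hg : IntegrableOn g (Icc 0 t)) (hgY : ∀ s ∈ Icc 0 t, ‖g s‖ ≤ b * ‖Y s‖ + a) :
    ∀ s ∈ Icc 0 t, ‖Y s‖ ≤ (‖Y₀‖ + a) * exp ((b + 1) * s) := by
  refine norm_le_of_eq_add_integral hb hY hg hgY continuous_const
    (hasDerivAt_const_mul_exp _ _) (fun s hs => ?_) (by simp [ha])
  have : ‖Y₀‖ + a ≤ (‖Y₀‖ + a) * exp ((b + 1) * s) :=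
    le_mul_of_one_le_right (by positivity) (one_le_exp (by nlinarith [hs.1]))
  linarith [norm_nonneg Y₀]

theorem integrableOn_of_eq_add_integral {Y g : ℝ → E} {Y₀ : E} {a b T : ℝ} (hT : 0 ≤ T)
    (ha : 0 ≤ a) (hb : 0 ≤ b) (hY : ∀ t ∈ Icc 0 T, Y t = Y₀ + ∫ τ in 0..t, g τ)
    (hgY : ∀ t ∈ Icc 0 T, ‖g t‖ ≤ b * ‖Y t‖ + a)
    (hmeas : ∀ s ∈ Icc 0 T, ContinuousOn Y (Icc s T) →
      AEStronglyMeasurable g (volume.restrict (Icc s T))) :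
    IntegrableOn g (Icc 0 T) := by
  set S := {t ∈ Icc 0 T | IntegrableOn g (Icc 0 t)}
  have hY_notMem : ∀ t ∈ Icc 0 T, t ∉ S → Y t = Y₀ := fun t ht htS => by
    rw [hY t ht, integral_undef fun hg =>
      htS ⟨ht, (intervalIntegrable_iff_integrableOn_Icc_of_le ht.1).1 hg⟩, add_zero]
  set C := (‖Y₀‖ + a) * exp ((b + 1) * T)
  have hYC : ∀ t ∈ Icc 0 T, ‖Y t‖ ≤ C := fun t ht => by
    by_cases htS : t ∈ S
    · exact (norm_le_mul_exp_of_eq_add_integral ha hb (fun s hs => hY s ⟨hs.1, hs.2.trans ht.2⟩)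
        htS.2 (fun s hs => hgY s ⟨hs.1, hs.2.trans ht.2⟩) t ⟨ht.1, le_rfl⟩).trans
        (mul_le_mul_of_nonneg_left (exp_le_exp.2 (by nlinarith [ht.2])) (by positivity))
    · rw [hY_notMem t ht htS]
      exact (le_add_of_nonneg_right ha).trans
        (le_mul_of_one_le_right (by positivity) (one_le_exp (by positivity)))
  have hgC : ∀ t ∈ Icc 0 T, ‖g t‖ ≤ b * C + a := fun t ht =>
    (hgY t ht).trans (by gcongr; exact hYC t ht)
  have hS0 : 0 ∈ S := ⟨⟨le_rfl, hT⟩, by simp⟩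
  have hSbdd : BddAbove S := ⟨T, fun t ht => ht.1.2⟩
  set c := sSup S
  have hc : c ∈ Icc 0 T := ⟨le_csSup hSbdd hS0, csSup_le ⟨0, hS0⟩ fun t ht => ht.1.2⟩
  have hcS : IntegrableOn g (Icc 0 c) := by
    obtain ⟨u, -, hu, huS⟩ := exists_seq_tendsto_sSup ⟨0, hS0⟩ hSbdd
    exact (integrableOn_Icc_iff_integrableOn_Ioc).2 (integrableOn_Ioc_of_tendsto
      (a := fun _ => 0) (fun n => (huS n).2.mono_set Ioc_subset_Icc_self)
      (fun n => Ioc_subset_Ioc_right (le_csSup hSbdd (huS n))) tendsto_const_nhds hu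
      fun t ht => hgC t ⟨ht.1.le, ht.2.trans hc.2⟩)
  rcases hc.2.eq_or_lt with hcT | hcT
  · exact hcT ▸ hcS
  -- beyond `c` the integrals are junk, so `Y` is constant there
  have hY_const : ∀ t ∈ Ioc c T, Y t = Y₀ := fun t ht =>
    hY_notMem t ⟨hc.1.trans ht.1.le, ht.2⟩ fun htS => (le_csSup hSbdd htS).not_gt ht.1
  rw [← Icc_union_Ioc_eq_Icc hc.1 hc.2]
  refine hcS.union (integrableOn_Ioc_of_forall_Icc hcT (fun s hs => ?_)
    fun t ht => hgC t ⟨hc.1.trans ht.1.le, ht.2⟩)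
  exact hmeas s ⟨hc.1.trans hs.1.le, hs.2.le⟩ (continuousOn_const.congr fun t ht =>
    hY_const t ⟨hs.1.trans_le ht.1, ht.2⟩)

end IntegralEquation

section Flow

variable {E : Type*} [NormedAddCommGroup E] [NormedSpace ℝ E]

theorem integrableOn_velocity_of_eq_add_integral {v : E → ℝ → E} {x : ℝ → E} {x₀ : E} {q T : ℝ}
    (hT : 0 ≤ T) (hq : 0 ≤ q) (hv : Continuous fun p : E × ℝ => v p.1 p.2)
    (hlip : ∀ τ ∈ Icc 0 T, ∀ z₁ z₂, ‖v z₁ τ - v z₂ τ‖ ≤ q * ‖z₁ - z₂‖)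
    (hx : ∀ t ∈ Icc 0 T, x t = x₀ + ∫ τ in 0..t, v (x τ) τ) :
    IntegrableOn (fun τ => v (x τ) τ) (Icc 0 T) := by
  obtain ⟨M, hM⟩ := isCompact_Icc.exists_bound_of_continuousOn
    (hv.comp ((continuous_const (y := (0 : E))).prodMk continuous_id)).continuousOn
  refine integrableOn_of_eq_add_integral hT ((norm_nonneg _).trans (hM 0 ⟨le_rfl, hT⟩)) hq hx
    (fun τ hτ => ?_) fun s _ hxs => ?_
  · calc ‖v (x τ) τ‖ ≤ ‖v (x τ) τ - v 0 τ‖ + ‖v 0 τ‖ := norm_le_norm_sub_add _ _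
      _ ≤ q * ‖x τ‖ + M := by
        gcongr
        · simpa using hlip τ hτ (x τ) 0
        · exact hM τ hτ
  · exact (hv.comp_continuousOn (hxs.prodMk continuousOn_id)).aestronglyMeasurable
      measurableSet_Icc

theorem norm_sub_le_mul_exp_of_eq_add_integral {v : E → ℝ → E} {x y : ℝ → E} {x₀ y₀ : E} {q T : ℝ}
    (hq : 0 ≤ q) (hlip : ∀ τ ∈ Icc 0 T, ∀ z₁ z₂, ‖v z₁ τ - v z₂ τ‖ ≤ q * ‖z₁ - z₂‖)
    (hx : ∀ t ∈ Icc 0 T, x t = x₀ + ∫ τ in 0..t, v (x τ) τ)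
    (hy : ∀ t ∈ Icc 0 T, y t = y₀ + ∫ τ in 0..t, v (y τ) τ)
    (hvx : IntegrableOn (fun τ => v (x τ) τ) (Icc 0 T))
    (hvy : IntegrableOn (fun τ => v (y τ) τ) (Icc 0 T)) :
    ∀ t ∈ Icc 0 T, ‖x t - y t‖ ≤ ‖x₀ - y₀‖ * exp (q * t) :=
  norm_le_of_eq_add_integral hq (sub_eq_add_integral_sub hx hy hvx hvy) (hvx.sub hvy)
    (f := fun _ => 0) (fun τ hτ => (hlip τ hτ (x τ) (y τ)).trans_eq (add_zero _).symm)
    continuous_const (hasDerivAt_const_mul_exp _ q) (fun _ _ => by rw [add_zero]) (by simp)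

theorem aestronglyMeasurable_fderiv_comp {F : Type*} [FiniteDimensional ℝ E]
    [NormedAddCommGroup F] [NormedSpace ℝ F] [FiniteDimensional ℝ F] {v : E → ℝ → F}
    (hv : Continuous fun p : E × ℝ => v p.1 p.2) {x : ℝ → E} {s : Set ℝ} (hs : MeasurableSet s)
    (hx : ContinuousOn x s) :
    AEStronglyMeasurable (fun τ => fderiv ℝ (fun z => v z τ) (x τ)) (volume.restrict s) := by
  borelize E
  exact ((measurable_fderiv_with_param ℝ (f := fun τ z => v z τ)
    (hv.comp continuous_swap)).comp_aemeasurable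
    (aemeasurable_id.prodMk (hx.aestronglyMeasurable hs).aemeasurable)).aestronglyMeasurable

end Flow

section LinearEquation

open ContinuousLinearMap

variable {E F : Type*} [NormedAddCommGroup E] [NormedSpace ℝ E] [NormedAddCommGroup F]
  [NormedSpace ℝ F] {A A₁ A₂ : ℝ → F →L[ℝ] F} {Φ Φ₁ Φ₂ : ℝ → E →L[ℝ] F} {Φ₀ : E →L[ℝ] F} {q T : ℝ}

theorem integrableOn_comp_of_eq_add_integral (hT : 0 ≤ T) (hq : 0 ≤ q)
    (hA : AEStronglyMeasurable A (volume.restrict (Icc 0 T))) (hAq : ∀ τ ∈ Icc 0 T, ‖A τ‖ ≤ q)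
    (hΦ : ∀ t ∈ Icc 0 T, Φ t = Φ₀ + ∫ τ in 0..t, (A τ).comp (Φ τ)) :
    IntegrableOn (fun τ => (A τ).comp (Φ τ)) (Icc 0 T) :=
  integrableOn_of_eq_add_integral hT le_rfl hq hΦ
    (fun τ hτ => (opNorm_comp_le_of_le (hAq τ hτ) le_rfl).trans_eq (add_zero _).symm)
    fun _ hs hΦs => isBoundedBilinearMap_comp.continuous.comp_aestronglyMeasurable
      ((hA.mono_measure (Measure.restrict_mono (Icc_subset_Icc_left hs.1) le_rfl)).prodMk
        (hΦs.aestronglyMeasurable measurableSet_Icc))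

theorem norm_le_mul_exp_of_eq_add_integral_comp (hq : 0 ≤ q) (hAq : ∀ τ ∈ Icc 0 T, ‖A τ‖ ≤ q)
    (hΦ : ∀ t ∈ Icc 0 T, Φ t = Φ₀ + ∫ τ in 0..t, (A τ).comp (Φ τ))
    (hAΦ : IntegrableOn (fun τ => (A τ).comp (Φ τ)) (Icc 0 T)) :
    ∀ t ∈ Icc 0 T, ‖Φ t‖ ≤ ‖Φ₀‖ * exp (q * t) :=
  norm_le_of_eq_add_integral hq hΦ hAΦ (f := fun _ => 0)
    (fun τ hτ => (opNorm_comp_le_of_le (hAq τ hτ) le_rfl).trans_eq (add_zero _).symm)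
    continuous_const (hasDerivAt_const_mul_exp _ q) (fun _ _ => by rw [add_zero]) (by simp)

theorem norm_sub_le_of_eq_add_integral_comp {κ ρ : ℝ} (hq : 0 ≤ q) (hκ : 0 ≤ κ)
    (hρ : 0 < ρ) (hA₁ : ∀ τ ∈ Icc 0 T, ‖A₁ τ‖ ≤ q) (hA₂ : ∀ τ ∈ Icc 0 T, ‖A₂ τ‖ ≤ q)
    (hA : ∀ τ ∈ Icc 0 T, ‖A₁ τ - A₂ τ‖ ≤ κ * exp (ρ * τ)) (hΦ₀ : ‖Φ₀‖ ≤ 1)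
    (hΦ₁ : ∀ t ∈ Icc 0 T, Φ₁ t = Φ₀ + ∫ τ in 0..t, (A₁ τ).comp (Φ₁ τ))
    (hΦ₂ : ∀ t ∈ Icc 0 T, Φ₂ t = Φ₀ + ∫ τ in 0..t, (A₂ τ).comp (Φ₂ τ))
    (hAΦ₁ : IntegrableOn (fun τ => (A₁ τ).comp (Φ₁ τ)) (Icc 0 T))
    (hAΦ₂ : IntegrableOn (fun τ => (A₂ τ).comp (Φ₂ τ)) (Icc 0 T)) :
    ∀ t ∈ Icc 0 T, ‖Φ₁ t - Φ₂ t‖ ≤ κ / ρ * exp ((q + ρ) * t) := by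
  refine norm_le_of_eq_add_integral hq (sub_eq_add_integral_sub hΦ₁ hΦ₂ hAΦ₁ hAΦ₂)
    (hAΦ₁.sub hAΦ₂) (f := fun τ => κ * exp ((q + ρ) * τ)) (fun τ hτ => ?_) (by fun_prop)
    (hasDerivAt_const_mul_exp _ _) (fun s _ => ?_) (by simp [div_nonneg hκ hρ.le])
  · have hΦ₂τ : ‖Φ₂ τ‖ ≤ exp (q * τ) :=
      (norm_le_mul_exp_of_eq_add_integral_comp hq hA₂ hΦ₂ hAΦ₂ τ hτ).trans
        (mul_le_of_le_one_left (exp_pos _).le hΦ₀)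
    calc ‖(A₁ τ).comp (Φ₁ τ) - (A₂ τ).comp (Φ₂ τ)‖
        = ‖(A₁ τ).comp (Φ₁ τ - Φ₂ τ) + (A₁ τ - A₂ τ).comp (Φ₂ τ)‖ := by
          rw [comp_sub, sub_comp]; abel_nf
      _ ≤ q * ‖Φ₁ τ - Φ₂ τ‖ + κ * exp (ρ * τ) * exp (q * τ) :=
          (norm_add_le _ _).trans (add_le_add (opNorm_comp_le_of_le (hA₁ τ hτ) le_rfl)
            (opNorm_comp_le_of_le (hA τ hτ) hΦ₂τ))
      _ = q * ‖Φ₁ τ - Φ₂ τ‖ + κ * exp ((q + ρ) * τ) := by rw [mul_assoc, ← exp_add]; ring_nf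
  · exact le_of_eq (by field_simp)

end LinearEquation

theorem gronwall_flow_gradient_general
    (d : ℕ) (γ : ℝ) (hγ : γ ∈ Set.Ioo (0:ℝ) 1)
    (q T : ℝ) (hq : 0 < q) (hT : 0 < T)
    (D₀ : Set (EuclideanSpace ℝ (Fin d)))
    (v : EuclideanSpace ℝ (Fin d) → ℝ → EuclideanSpace ℝ (Fin d))
    (hv : Continuous fun p : EuclideanSpace ℝ (Fin d) × ℝ => v p.1 p.2)
    (X : EuclideanSpace ℝ (Fin d) → ℝ → EuclideanSpace ℝ (Fin d))
    (hX : ∀ α : EuclideanSpace ℝ (Fin d), ∀ t ∈ Set.Icc (0:ℝ) T,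
      X α t = α + ∫ τ in (0:ℝ)..t, v (X α τ) τ)
    (hvdiff : ∀ τ ∈ Set.Icc (0:ℝ) T, ∀ x, DifferentiableAt ℝ (fun z => v z τ) x)
    (hvq : ∀ τ ∈ Set.Icc (0:ℝ) T, ∀ x, ‖fderiv ℝ (fun z => v z τ) x‖ ≤ q)
    (hvhold : ∀ τ ∈ Set.Icc (0:ℝ) T,
      ∀ x₁ ∈ (fun α => X α τ) '' D₀, ∀ x₂ ∈ (fun α => X α τ) '' D₀,
        ‖fderiv ℝ (fun z => v z τ) x₁ - fderiv ℝ (fun z => v z τ) x₂‖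
          ≤ q * ‖x₁ - x₂‖ ^ γ)
    (hXint : ∀ α ∈ D₀, ∀ t ∈ Set.Icc (0:ℝ) T,
      fderiv ℝ (fun β => X β t) α
        = ContinuousLinearMap.id ℝ (EuclideanSpace ℝ (Fin d))
          + ∫ τ in (0:ℝ)..t,
              (fderiv ℝ (fun z => v z τ) (X α τ)).comp (fderiv ℝ (fun β => X β τ) α)) :
    ∀ α ∈ D₀, ∀ β ∈ D₀, ∀ t ∈ Set.Icc (0:ℝ) T,
      ‖fderiv ℝ (fun b => X b t) α‖ ≤ Real.exp (q * t) ∧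
      ‖fderiv ℝ (fun b => X b t) α - fderiv ℝ (fun b => X b t) β‖
        ≤ (1 / γ) * Real.exp (q * (γ + 1) * t) * ‖α - β‖ ^ γ := by
  intro α hα β hβ t ht
  have hlip : ∀ τ ∈ Icc 0 T, ∀ z₁ z₂, ‖v z₁ τ - v z₂ τ‖ ≤ q * ‖z₁ - z₂‖ := fun τ hτ z₁ z₂ =>
    convex_univ.norm_image_sub_le_of_norm_fderiv_le (fun w _ => hvdiff τ hτ w)
      (fun w _ => hvq τ hτ w) (mem_univ z₂) (mem_univ z₁)
  have hvX α := integrableOn_velocity_of_eq_add_integral hT.le hq.le hv hlip (hX α)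
  have hAΦ : ∀ α ∈ D₀, IntegrableOn (fun τ => (fderiv ℝ (fun z => v z τ) (X α τ)).comp
      (fderiv ℝ (fun β => X β τ) α)) (Icc 0 T) := fun α hα =>
    integrableOn_comp_of_eq_add_integral hT.le hq.le
      (aestronglyMeasurable_fderiv_comp hv measurableSet_Icc
        (continuousOn_of_eq_add_integral (hX α) (hvX α)))
      (fun τ hτ => hvq τ hτ _) (hXint α hα)
  refine ⟨(norm_le_mul_exp_of_eq_add_integral_comp hq.le (fun τ hτ => hvq τ hτ _) (hXint α hα)
    (hAΦ α hα) t ht).trans (mul_le_of_le_one_left (exp_pos _).le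
      (ContinuousLinearMap.norm_id_le)), ?_⟩
  have hA : ∀ τ ∈ Icc 0 T, ‖fderiv ℝ (fun z => v z τ) (X α τ) - fderiv ℝ (fun z => v z τ) (X β τ)‖
      ≤ q * ‖α - β‖ ^ γ * exp (q * γ * τ) := fun τ hτ => calc
    _ ≤ q * ‖X α τ - X β τ‖ ^ γ := hvhold τ hτ _ ⟨α, hα, rfl⟩ _ ⟨β, hβ, rfl⟩
    _ ≤ q * (‖α - β‖ * exp (q * τ)) ^ γ := by
      gcongr
      · exact hγ.1.le
      · exact norm_sub_le_mul_exp_of_eq_add_integral hq.le hlip (hX α) (hX β) (hvX α) (hvX β) τ hτ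
    _ = q * ‖α - β‖ ^ γ * exp (q * γ * τ) := by
      rw [mul_rpow (norm_nonneg _) (exp_pos _).le, ← exp_mul]; ring_nf
  calc _ ≤ q * ‖α - β‖ ^ γ / (q * γ) * exp ((q + q * γ) * t) :=
        norm_sub_le_of_eq_add_integral_comp hq.le (by positivity)
          (mul_pos hq hγ.1) (fun τ hτ => hvq τ hτ _) (fun τ hτ => hvq τ hτ _) hA
          ContinuousLinearMap.norm_id_le (hXint α hα) (hXint β hβ) (hAΦ α hα) (hAΦ β hβ) t ht
    _ = _ := by field_simp; ring_nf

/-- Grönwall estimates for the spatial gradient of the flow. -/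
theorem gronwall_flow_gradient
    (d : ℕ) (hd : 2 ≤ d) (γ : ℝ) (hγ : γ ∈ Set.Ioo (0:ℝ) 1)
    (q T : ℝ) (hq : 0 < q) (hT : 0 < T)
    (D₀ : Set (EuclideanSpace ℝ (Fin d))) (hD₀ : IsOpen D₀)
    (v : EuclideanSpace ℝ (Fin d) → ℝ → EuclideanSpace ℝ (Fin d))
    (hv : Continuous fun p : EuclideanSpace ℝ (Fin d) × ℝ => v p.1 p.2)
    (X : EuclideanSpace ℝ (Fin d) → ℝ → EuclideanSpace ℝ (Fin d))
    (hX : ∀ α : EuclideanSpace ℝ (Fin d), ∀ t ∈ Set.Icc (0:ℝ) T,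
      X α t = α + ∫ τ in (0:ℝ)..t, v (X α τ) τ)
    (hvdiff : ∀ τ ∈ Set.Icc (0:ℝ) T, ∀ x, DifferentiableAt ℝ (fun z => v z τ) x)
    (hvq : ∀ τ ∈ Set.Icc (0:ℝ) T, ∀ x, ‖fderiv ℝ (fun z => v z τ) x‖ ≤ q)
    (hvhold : ∀ τ ∈ Set.Icc (0:ℝ) T,
      ∀ x₁ ∈ (fun α => X α τ) '' D₀, ∀ x₂ ∈ (fun α => X α τ) '' D₀,
        ‖fderiv ℝ (fun z => v z τ) x₁ - fderiv ℝ (fun z => v z τ) x₂‖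
          ≤ q * ‖x₁ - x₂‖ ^ γ)
    (hXdiff : ∀ τ ∈ Set.Icc (0:ℝ) T, ∀ α ∈ D₀, DifferentiableAt ℝ (fun β => X β τ) α)
    (hXint : ∀ α ∈ D₀, ∀ t ∈ Set.Icc (0:ℝ) T,
      fderiv ℝ (fun β => X β t) α
        = ContinuousLinearMap.id ℝ (EuclideanSpace ℝ (Fin d))
          + ∫ τ in (0:ℝ)..t,
              (fderiv ℝ (fun z => v z τ) (X α τ)).comp (fderiv ℝ (fun β => X β τ) α)) :
    ∀ α ∈ D₀, ∀ β ∈ D₀, ∀ t ∈ Set.Icc (0:ℝ) T,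
      ‖fderiv ℝ (fun b => X b t) α‖ ≤ Real.exp (q * t) ∧
      ‖fderiv ℝ (fun b => X b t) α - fderiv ℝ (fun b => X b t) β‖
        ≤ (1 / γ) * Real.exp (q * (γ + 1) * t) * ‖α - β‖ ^ γ :=
  gronwall_flow_gradient_general d γ hγ q T hq hT D₀ v hv X hX hvdiff hvq hvhold hXint
end
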